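/- arXiv:1503.04981 — 8 statements merged into one kernel-verified Lean document; each statement's English description precedes it below -/
import Mathlib

section
/- Let I ⊂ ℝ be a compact interval, let h : I → ℝ be twice continuously differentiable, and suppose δ₂ > 0 satisfies |h''(x)| ≥ δ₂ for all x ∈ I. Then for every η > 0 the Lebesgue measure of the set E(η) := {x ∈ I : |h(x)| < η} satisfies |E(η)| ≤ 4·√(η/δ₂). -/
/-!
By the intermediate value theorem `h''` has constant sign on `[a, b]`, so after replacing `h` by
`-h` we may assume `h'' ≥ δ₂`. Then `h - δ₂ t² / 2` is convex, which gives the tangent bound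
`h y ≥ h x + h' x (y - x) + δ₂ (y - x)² / 2`. For `x, y ∈ E(η)` with `h' x (y - x) ≥ 0` the left
side is `< η` and the right side is `> -η + δ₂ (y - x)² / 2`, so `|y - x| < 2√(η/δ₂)`. Hence
`E(η) ∩ {h' ≥ 0}` and `E(η) ∩ {h' ≤ 0}` both have diameter at most `2√(η/δ₂)`.
-/

open MeasureTheory Set

theorem IsPreconnected.forall_le_or_forall_le_neg_of_le_abs {X : Type*} [TopologicalSpace X]
    {s : Set X} (hs : IsPreconnected s) {f : X → ℝ} (hf : ContinuousOn f s) {δ : ℝ} (hδ : 0 < δ)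
    (hfδ : ∀ x ∈ s, δ ≤ |f x|) : (∀ x ∈ s, δ ≤ f x) ∨ (∀ x ∈ s, f x ≤ -δ) := by
  by_contra! ⟨⟨x, hx, hfx⟩, ⟨y, hy, hfy⟩⟩
  have hfx' : f x ≤ -δ := by cases le_abs'.mp (hfδ x hx) <;> linarith
  have hfy' : δ ≤ f y := by cases le_abs'.mp (hfδ y hy) <;> linarith
  obtain ⟨z, hz, hfz⟩ := hs.intermediate_value hx hy hf
    (show (0 : ℝ) ∈ Icc (f x) (f y) from ⟨by linarith, by linarith⟩)
  have := hfδ z hz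
  rw [hfz, abs_zero] at this
  linarith

theorem ConvexOn.add_mul_sub_le_of_hasDerivAt {s : Set ℝ} {f : ℝ → ℝ} {x y f' : ℝ}
    (hf : ConvexOn ℝ s f) (hx : x ∈ s) (hy : y ∈ s) (hf' : HasDerivAt f f' x) :
    f x + f' * (y - x) ≤ f y := by
  rcases lt_trichotomy x y with hxy | rfl | hyx
  · have := hf.le_slope_of_hasDerivAt hx hy hxy hf'
    rw [slope_def_field, le_div_iff₀ (sub_pos.mpr hxy)] at this
    linarith
  · simp
  · have := hf.slope_le_of_hasDerivAt hy hx hyx hf'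
    rw [slope_def_field, div_le_iff₀ (sub_pos.mpr hyx)] at this
    linarith

theorem Real.volume_le_ofReal_of_forall_le_imp_sub_le {A : Set ℝ} {L : ℝ}
    (hA : ∀ x ∈ A, ∀ y ∈ A, x ≤ y → y - x ≤ L) : volume A ≤ ENNReal.ofReal L := by
  refine (Real.volume_le_diam A).trans (Metric.ediam_le_of_forall_dist_le fun x hx y hy => ?_)
  rcases le_total x y with hxy | hyx
  · rw [dist_comm, Real.dist_eq, abs_of_nonneg (sub_nonneg.2 hxy)]
    exact hA x hx y hy hxy
  · rw [Real.dist_eq, abs_of_nonneg (sub_nonneg.2 hyx)]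
    exact hA y hy x hx hyx

section SecondDerivativeLowerBound

variable {s : Set ℝ} {f f' f'' : ℝ → ℝ} {δ : ℝ}

theorem add_mul_sub_add_sq_le_of_le_hasDerivAt2 (hs : Convex ℝ s)
    (hf : ∀ x ∈ s, HasDerivAt f (f' x) x) (hf' : ∀ x ∈ s, HasDerivAt f' (f'' x) x)
    (hδ : ∀ x ∈ s, δ ≤ f'' x) {x y : ℝ} (hx : x ∈ s) (hy : y ∈ s) :
    f x + f' x * (y - x) + δ / 2 * (y - x) ^ 2 ≤ f y := by
  have hg (t : ℝ) (ht : t ∈ s) : HasDerivAt (fun t => f t - δ / 2 * t ^ 2) (f' t - δ * t) t := by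
    refine ((hf t ht).sub ((hasDerivAt_pow 2 t).const_mul (δ / 2))).congr_deriv ?_
    norm_num
    ring
  have hconv : ConvexOn ℝ s (fun t => f t - δ / 2 * t ^ 2) := by
    refine convexOn_of_hasDerivWithinAt2_nonneg hs
      (fun t ht => (hg t ht).continuousAt.continuousWithinAt)
      (fun t ht => (hg t (interior_subset ht)).hasDerivWithinAt)
      (fun t ht =>
        ((hf' t (interior_subset ht)).sub ((hasDerivAt_id t).const_mul δ)).hasDerivWithinAt)
      fun t ht => ?_
    simpa using hδ t (interior_subset ht)
  have := hconv.add_mul_sub_le_of_hasDerivAt hx hy (hg x hx)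
  linarith

theorem abs_sub_lt_of_le_hasDerivAt2 (hs : Convex ℝ s) (hf : ∀ x ∈ s, HasDerivAt f (f' x) x)
    (hf' : ∀ x ∈ s, HasDerivAt f' (f'' x) x) (hδ₀ : 0 < δ) (hδ : ∀ x ∈ s, δ ≤ f'' x)
    {η x y : ℝ} (hx : x ∈ s) (hy : y ∈ s) (hfx : |f x| < η) (hfy : |f y| < η)
    (hslope : 0 ≤ f' x * (y - x)) : |y - x| < 2 * √(η / δ) := by
  have htaylor := add_mul_sub_add_sq_le_of_le_hasDerivAt2 hs hf hf' hδ hx hy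
  have hη : 0 ≤ η / δ := div_nonneg ((abs_nonneg _).trans hfx.le) hδ₀.le
  refine abs_lt_of_sq_lt_sq ?_ (by positivity)
  rw [mul_pow, Real.sq_sqrt hη, ← mul_div_assoc, lt_div_iff₀ hδ₀]
  linarith [abs_lt.mp hfx, abs_lt.mp hfy]

theorem volume_abs_lt_le_of_le_hasDerivAt2 (hs : Convex ℝ s)
    (hf : ∀ x ∈ s, HasDerivAt f (f' x) x) (hf' : ∀ x ∈ s, HasDerivAt f' (f'' x) x)
    (hδ₀ : 0 < δ) (hδ : ∀ x ∈ s, δ ≤ f'' x) (η : ℝ) :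
    volume {x ∈ s | |f x| < η} ≤ ENNReal.ofReal (4 * √(η / δ)) := by
  set E := {x ∈ s | |f x| < η}
  have hE : E ⊆ {x ∈ E | 0 ≤ f' x} ∪ {x ∈ E | f' x ≤ 0} := fun x hx =>
    (le_total 0 (f' x)).imp (⟨hx, ·⟩) (⟨hx, ·⟩)
  have hpos : volume {x ∈ E | 0 ≤ f' x} ≤ ENNReal.ofReal (2 * √(η / δ)) :=
    Real.volume_le_ofReal_of_forall_le_imp_sub_le fun x hx y hy hxy =>
      (le_abs_self _).trans (abs_sub_lt_of_le_hasDerivAt2 hs hf hf' hδ₀ hδ hx.1.1 hy.1.1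
        hx.1.2 hy.1.2 (mul_nonneg hx.2 (sub_nonneg.2 hxy))).le
  have hneg : volume {x ∈ E | f' x ≤ 0} ≤ ENNReal.ofReal (2 * √(η / δ)) :=
    Real.volume_le_ofReal_of_forall_le_imp_sub_le fun x hx y hy hxy =>
      ((le_abs_self _).trans_eq (abs_sub_comm _ _)).trans
        (abs_sub_lt_of_le_hasDerivAt2 hs hf hf' hδ₀ hδ hy.1.1 hx.1.1 hy.1.2 hx.1.2
          (mul_nonneg_of_nonpos_of_nonpos hy.2 (sub_nonpos.2 hxy))).le
  calc volume E ≤ volume {x ∈ E | 0 ≤ f' x} + volume {x ∈ E | f' x ≤ 0} :=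
        (measure_mono hE).trans (measure_union_le _ _)
    _ ≤ ENNReal.ofReal (2 * √(η / δ)) + ENNReal.ofReal (2 * √(η / δ)) := add_le_add hpos hneg
    _ = ENNReal.ofReal (4 * √(η / δ)) := by
        rw [← ENNReal.ofReal_add (by positivity) (by positivity)]
        ring_nf

end SecondDerivativeLowerBound

theorem pyartly_second_derivative_general
    (a b : ℝ)
    (h : ℝ → ℝ) (hh : ContDiff ℝ 2 h)
    (δ₂ : ℝ) (hδ₂ : 0 < δ₂)
    (hder : ∀ x ∈ Icc a b, δ₂ ≤ |deriv (deriv h) x|)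
    (η : ℝ) :
    volume {x ∈ Icc a b | |h x| < η} ≤ ENNReal.ofReal (4 * Real.sqrt (η / δ₂)) := by
  have hd1 : Differentiable ℝ h := hh.differentiable (by norm_num)
  have hd2 : Differentiable ℝ (deriv h) := by
    simpa using hh.differentiable_iteratedDeriv 1 (by norm_num)
  have hc2 : Continuous (deriv (deriv h)) := by
    simpa [iteratedDeriv_eq_iterate] using hh.continuous_iteratedDeriv 2 le_rfl
  rcases isPreconnected_Icc.forall_le_or_forall_le_neg_of_le_abs hc2.continuousOn hδ₂ hder
    with hconvex | hconcave
  · exact volume_abs_lt_le_of_le_hasDerivAt2 (convex_Icc a b) (fun x _ => (hd1 x).hasDerivAt)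
      (fun x _ => (hd2 x).hasDerivAt) hδ₂ hconvex η
  · simpa only [Pi.neg_apply, abs_neg] using volume_abs_lt_le_of_le_hasDerivAt2 (f := -h)
      (convex_Icc a b) (fun x _ => (hd1 x).hasDerivAt.neg) (fun x _ => (hd2 x).hasDerivAt.neg)
      hδ₂ (fun x hx => le_neg_of_le_neg (hconcave x hx)) η

/-- **Pyartly's lemma, second-derivative case.** If `|h''(x)| ≥ δ₂` on the
compact interval `[a,b]`, then `|{x ∈ [a,b] : |h(x)| < η}| ≤ 4√(η/δ₂)`. -/
theorem pyartly_second_derivative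
    (a b : ℝ) (hab : a ≤ b)
    (h : ℝ → ℝ) (hh : ContDiff ℝ 2 h)
    (δ₂ : ℝ) (hδ₂ : 0 < δ₂)
    (hder : ∀ x ∈ Icc a b, δ₂ ≤ |deriv (deriv h) x|)
    (η : ℝ) (hη : 0 < η) :
    volume {x ∈ Icc a b | |h x| < η} ≤ ENNReal.ofReal (4 * Real.sqrt (η / δ₂)) :=
  pyartly_second_derivative_general a b h hh δ₂ hδ₂ hder η
end

section
/- Let I ⊂ ℝ be a compact interval, let G : I → ℝ be twice continuously differentiable, and suppose 0 < A₁ ≤ |G''(x)| ≤ A₂ for all x ∈ I. Suppose x₀ ∈ I satisfies G'(x₀) = 0. Then for every x ∈ I one has (2A₁²/A₂)·|G(x) − G(x₀)| ≤ G'(x)² ≤ (2A₂²/A₁)·|G(x) − G(x₀)|. -/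
/-!
Taylor's formula at the critical point gives `G x - G x₀ = G''(d) (x - x₀)² / 2` and the mean
value theorem for `G'` gives `G' x = G''(e) (x - x₀)`, with `d, e` between `x₀` and `x`. Both
`|G''(d)|` and `|G''(e)|` lie in `[A₁, A₂]`, so `G'(x)²` and `|G x - G x₀|` are both comparable
to `(x - x₀)²`.
-/

open Set

theorem exists_ratio_hasDerivAt_eq_ratio_slope_uIoo (f f' g g' : ℝ → ℝ) {a b : ℝ} (hab : a ≠ b)
    (hff' : ∀ t ∈ uIcc a b, HasDerivAt f (f' t) t)
    (hgg' : ∀ t ∈ uIcc a b, HasDerivAt g (g' t) t) :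
    ∃ c ∈ uIoo a b, (g b - g a) * f' c = (f b - f a) * g' c := by
  wlog hlt : a < b generalizing a b
  · obtain ⟨c, hc, hcab⟩ := this hab.symm (uIcc_comm a b ▸ hff') (uIcc_comm a b ▸ hgg')
      (hab.lt_or_gt.resolve_left hlt)
    exact ⟨c, uIoo_comm a b ▸ hc, by linarith⟩
  rw [uIcc_of_lt hlt] at hff' hgg'
  rw [uIoo_of_lt hlt]
  exact exists_ratio_hasDerivAt_eq_ratio_slope f f' hlt
    (fun t ht => (hff' t ht).continuousAt.continuousWithinAt)
    (fun t ht => hff' t (Ioo_subset_Icc_self ht)) g g'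
    (fun t ht => (hgg' t ht).continuousAt.continuousWithinAt)
    (fun t ht => hgg' t (Ioo_subset_Icc_self ht))

theorem exists_eq_mul_sub_of_hasDerivAt_of_eq_zero {f f' : ℝ → ℝ} {x₀ x : ℝ}
    (hff' : ∀ t ∈ uIcc x₀ x, HasDerivAt f (f' t) t) (hf₀ : f x₀ = 0) :
    ∃ e ∈ uIcc x₀ x, f x = f' e * (x - x₀) := by
  rcases eq_or_ne x₀ x with rfl | hne
  · exact ⟨x₀, left_mem_uIcc, by simp [hf₀]⟩
  obtain ⟨e, he, hslope⟩ := exists_ratio_hasDerivAt_eq_ratio_slope_uIoo f f' id 1 hne hff'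
    (fun t _ => hasDerivAt_id t)
  exact ⟨e, uIoo_subset_uIcc_self he, by simp only [id, Pi.one_apply] at hslope; linarith⟩

theorem exists_sub_eq_mul_sq_of_hasDerivAt_of_eq_zero {f f' f'' : ℝ → ℝ} {x₀ x : ℝ}
    (hff' : ∀ t ∈ uIcc x₀ x, HasDerivAt f (f' t) t)
    (hf'f'' : ∀ t ∈ uIcc x₀ x, HasDerivAt f' (f'' t) t) (hcrit : f' x₀ = 0) :
    ∃ d ∈ uIcc x₀ x, f x - f x₀ = f'' d * (x - x₀) ^ 2 / 2 := by
  rcases eq_or_ne x₀ x with rfl | hne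
  · exact ⟨x₀, left_mem_uIcc, by simp⟩
  obtain ⟨c, hc, hcauchy⟩ := exists_ratio_hasDerivAt_eq_ratio_slope_uIoo f f'
    (fun t => (t - x₀) ^ 2) (fun t => 2 * (t - x₀)) hne hff'
    (fun t _ => by simpa using ((hasDerivAt_id' t).sub_const x₀).fun_pow 2)
  have hc_sub : uIcc x₀ c ⊆ uIcc x₀ x := uIcc_subset_uIcc_left (uIoo_subset_uIcc_self hc)
  obtain ⟨d, hd, hf'c⟩ := exists_eq_mul_sub_of_hasDerivAt_of_eq_zero
    (fun t ht => hf'f'' t (hc_sub ht)) hcrit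
  have hcx₀ : c - x₀ ≠ 0 := sub_ne_zero.mpr (ne_of_mem_of_not_mem hc left_notMem_uIoo)
  refine ⟨d, hc_sub hd, ?_⟩
  rw [hf'c] at hcauchy
  apply mul_right_cancel₀ hcx₀
  linear_combination -hcauchy / 2

theorem sq_mul_comparable_abs_mul_sq {A₁ A₂ p q s : ℝ} (hA₁ : 0 < A₁)
    (hp : A₁ ≤ |p| ∧ |p| ≤ A₂) (hq : A₁ ≤ |q| ∧ |q| ≤ A₂) :
    2 * A₁ ^ 2 / A₂ * |q * s ^ 2 / 2| ≤ (p * s) ^ 2 ∧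
      (p * s) ^ 2 ≤ 2 * A₂ ^ 2 / A₁ * |q * s ^ 2 / 2| := by
  have hA₂ : 0 < A₂ := hA₁.trans_le (hp.1.trans hp.2)
  have habs : |q * s ^ 2 / 2| = |q| * s ^ 2 / 2 := by
    rw [abs_div, abs_mul, abs_of_nonneg (sq_nonneg s), abs_two]
  have hps : (p * s) ^ 2 = |p| ^ 2 * s ^ 2 := by rw [mul_pow, sq_abs]
  rw [habs, hps]
  constructor
  · calc 2 * A₁ ^ 2 / A₂ * (|q| * s ^ 2 / 2) = A₁ ^ 2 * (|q| / A₂) * s ^ 2 := by ring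
      _ ≤ A₁ ^ 2 * 1 * s ^ 2 := by gcongr; exact (div_le_one hA₂).mpr hq.2
      _ ≤ |p| ^ 2 * s ^ 2 := by rw [mul_one]; gcongr; exact hp.1
  · calc |p| ^ 2 * s ^ 2 ≤ A₂ ^ 2 * 1 * s ^ 2 := by rw [mul_one]; gcongr; exact hp.2
      _ ≤ A₂ ^ 2 * (|q| / A₁) * s ^ 2 := by gcongr; exact (one_le_div hA₁).mpr hq.1
      _ = 2 * A₂ ^ 2 / A₁ * (|q| * s ^ 2 / 2) := by ring

theorem deriv_sq_comparable_near_critical_point_general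
    (a b : ℝ)
    (G : ℝ → ℝ) (hG : ContDiff ℝ 2 G)
    (A₁ A₂ : ℝ) (hA₁ : 0 < A₁)
    (hbound : ∀ x ∈ Icc a b, A₁ ≤ |deriv (deriv G) x| ∧ |deriv (deriv G) x| ≤ A₂)
    (x₀ : ℝ) (hx₀ : x₀ ∈ Icc a b) (hcrit : deriv G x₀ = 0) :
    ∀ x ∈ Icc a b,
      2 * A₁ ^ 2 / A₂ * |G x - G x₀| ≤ (deriv G x) ^ 2 ∧
      (deriv G x) ^ 2 ≤ 2 * A₂ ^ 2 / A₁ * |G x - G x₀| := by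
  intro x hx
  have hG' : ∀ t ∈ uIcc x₀ x, HasDerivAt G (deriv G t) t := fun t _ =>
    (hG.differentiable two_ne_zero t).hasDerivAt
  have hG'' : ∀ t ∈ uIcc x₀ x, HasDerivAt (deriv G) (deriv (deriv G) t) t := fun t _ =>
    ((hG.iterate_deriv' 1 1).differentiable one_ne_zero t).hasDerivAt
  obtain ⟨d, hd, hGx⟩ := exists_sub_eq_mul_sq_of_hasDerivAt_of_eq_zero hG' hG'' hcrit
  obtain ⟨e, he, hG'x⟩ := exists_eq_mul_sub_of_hasDerivAt_of_eq_zero hG'' hcrit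
  rw [hGx, hG'x]
  exact sq_mul_comparable_abs_mul_sq hA₁ (hbound e (uIcc_subset_Icc hx₀ hx he))
    (hbound d (uIcc_subset_Icc hx₀ hx hd))

/-- If `0 < A₁ ≤ |G''| ≤ A₂` on the compact interval `[a,b]` and `G'(x₀) = 0`,
then `(2A₁²/A₂)|G(x) - G(x₀)| ≤ G'(x)² ≤ (2A₂²/A₁)|G(x) - G(x₀)|` on `[a,b]`. -/
theorem deriv_sq_comparable_near_critical_point
    (a b : ℝ) (hab : a ≤ b)
    (G : ℝ → ℝ) (hG : ContDiff ℝ 2 G)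
    (A₁ A₂ : ℝ) (hA₁ : 0 < A₁)
    (hbound : ∀ x ∈ Icc a b, A₁ ≤ |deriv (deriv G) x| ∧ |deriv (deriv G) x| ≤ A₂)
    (x₀ : ℝ) (hx₀ : x₀ ∈ Icc a b) (hcrit : deriv G x₀ = 0) :
    ∀ x ∈ Icc a b,
      2 * A₁ ^ 2 / A₂ * |G x - G x₀| ≤ (deriv G x) ^ 2 ∧
      (deriv G x) ^ 2 ≤ 2 * A₂ ^ 2 / A₁ * |G x - G x₀| :=
  deriv_sq_comparable_near_critical_point_general a b G hG A₁ A₂ hA₁ hbound x₀ hx₀ hcrit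
end

section
/- Let I ⊂ ℝ be a compact interval and let f, λ : I → ℝ be C² functions with 0 < c₁ ≤ |f''(x)| ≤ c₂ for all x ∈ I. Then there exist constants C₁, C₂ > 0 and a threshold T > 0, depending only on c₁, c₂ and sup_{x∈I}|λ''(x)|, with the following property. Let (a₁, a₂) ∈ ℤ² with |a₂| ≥ T, set 𝓕(x) := a₂ f(x) + a₁ x + λ(x), and suppose x₀ ∈ I satisfies 𝓕'(x₀) = 0. Then: (i) for all x ∈ I, C₁·|a₂|·|𝓕(x) − 𝓕(x₀)| ≤ 𝓕'(x)² ≤ C₂·|a₂|·|𝓕(x) − 𝓕(x₀)|; and (ii) if a₀, a₀' ∈ ℤ with a₀ ≠ a₀', |𝓕(x) + a₀| < 1/4 for some x ∈ I, and |𝓕(x₀) + a₀'| ≤ 1/2, then |𝓕(x) − 𝓕(x₀)| ≥ |a₀ − a₀'|/4. -/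
/-!
Since `f''` is continuous and bounded away from `0`, it has constant sign; once `|a₂|` dominates
`sup |λ''|`, so does `𝓕'' = a₂ f'' + λ''`, with `|𝓕''| ≍ |a₂|`. Replacing `𝓕` by `-𝓕` if necessary,
`𝓕` is convex with `m ≤ 𝓕'' ≤ M`, hence `𝓕'` has the sign of `x - x₀` and `x₀` minimises `𝓕`.
The functions `𝓕'² - 2m(𝓕 - 𝓕(x₀))` and `2M(𝓕 - 𝓕(x₀)) - 𝓕'²` vanish at `x₀` and have derivatives
`2𝓕'(𝓕'' - m)` and `2𝓕'(M - 𝓕'')`, of the sign of `x - x₀`, so they are nonnegative.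
The gap bound is the triangle inequality through the integers `a₀` and `a₀'`, which are `≥ 1` apart.
-/

open Set

theorem IsPreconnected.forall_le_or_forall_le_neg_of_le_abs_s7 {s : Set ℝ} (hs : IsPreconnected s)
    {g : ℝ → ℝ} (hg : ContinuousOn g s) {m : ℝ} (hm : 0 < m) (hgm : ∀ x ∈ s, m ≤ |g x|) :
    (∀ x ∈ s, m ≤ g x) ∨ (∀ x ∈ s, g x ≤ -m) := by
  have hcover : g '' s ⊆ Ioi 0 ∪ Iio 0 := by
    rintro _ ⟨x, hx, rfl⟩
    exact ne_iff_lt_or_gt.mp (abs_pos.mp (hm.trans_le (hgm x hx))) |>.symm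
  rcases (hs.image g hg).subset_or_subset isOpen_Ioi isOpen_Iio
      Ioi_disjoint_Iio_same hcover with hpos | hneg
  · refine .inl fun x hx => ?_
    have := hgm x hx
    rwa [abs_of_pos (hpos (mem_image_of_mem g hx))] at this
  · refine .inr fun x hx => ?_
    have := hgm x hx
    rw [abs_of_neg (hneg (mem_image_of_mem g hx))] at this
    linarith

section

variable {a b x₀ : ℝ}

theorem isMinOn_Icc_of_sub_mul_deriv_nonneg {W : ℝ → ℝ} (hW : Differentiable ℝ W)
    (hx₀ : x₀ ∈ Icc a b) (hsign : ∀ x ∈ Icc a b, 0 ≤ (x - x₀) * deriv W x) :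
    IsMinOn W (Icc a b) x₀ := by
  intro x hx
  rcases le_total x₀ x with hle | hle
  · refine monotoneOn_of_deriv_nonneg (convex_Icc x₀ b) hW.continuous.continuousOn
      hW.differentiableOn ?_ ⟨le_rfl, hx₀.2⟩ ⟨hle, hx.2⟩ hle
    intro y hy
    rw [interior_Icc] at hy
    exact nonneg_of_mul_nonneg_right (hsign y ⟨hx₀.1.trans hy.1.le, hy.2.le⟩) (sub_pos.2 hy.1)
  · refine antitoneOn_of_deriv_nonpos (convex_Icc a x₀) hW.continuous.continuousOn
      hW.differentiableOn ?_ ⟨hx.1, hle⟩ ⟨hx₀.1, le_rfl⟩ hle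
    intro y hy
    rw [interior_Icc] at hy
    exact nonpos_of_mul_nonneg_right (hsign y ⟨hy.1.le, hy.2.le.trans hx₀.2⟩) (sub_neg.2 hy.2)

theorem sub_mul_deriv_nonneg_of_deriv_deriv_nonneg {G : ℝ → ℝ}
    (hG' : Differentiable ℝ (deriv G)) (hconv : ∀ x ∈ Icc a b, 0 ≤ deriv (deriv G) x)
    (hx₀ : x₀ ∈ Icc a b) (hcrit : deriv G x₀ = 0) :
    ∀ x ∈ Icc a b, 0 ≤ (x - x₀) * deriv G x := by
  have hmono : MonotoneOn (deriv G) (Icc a b) :=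
    monotoneOn_of_deriv_nonneg (convex_Icc a b) hG'.continuous.continuousOn
      hG'.differentiableOn fun y hy => hconv y (interior_subset hy)
  intro x hx
  rcases le_total x₀ x with hle | hle
  · exact mul_nonneg (sub_nonneg.2 hle) (hcrit ▸ hmono hx₀ hx hle)
  · exact mul_nonneg_of_nonpos_of_nonpos (sub_nonpos.2 hle) (hcrit ▸ hmono hx hx₀ hle)

theorem sq_deriv_bounds_of_deriv_deriv_mem_Icc {G : ℝ → ℝ} (hG : Differentiable ℝ G)
    (hG' : Differentiable ℝ (deriv G)) {m M : ℝ} (hm : 0 ≤ m)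
    (hbd : ∀ x ∈ Icc a b, m ≤ deriv (deriv G) x ∧ deriv (deriv G) x ≤ M)
    (hx₀ : x₀ ∈ Icc a b) (hcrit : deriv G x₀ = 0) (x : ℝ) (hx : x ∈ Icc a b) :
    2 * m * |G x - G x₀| ≤ deriv G x ^ 2 ∧ deriv G x ^ 2 ≤ 2 * M * |G x - G x₀| := by
  have hsign := sub_mul_deriv_nonneg_of_deriv_deriv_nonneg hG'
    (fun y hy => hm.trans (hbd y hy).1) hx₀ hcrit
  have habs : |G x - G x₀| = G x - G x₀ :=
    abs_of_nonneg (sub_nonneg.2 (isMinOn_Icc_of_sub_mul_deriv_nonneg hG hx₀ hsign hx))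
  have hW (c y : ℝ) : HasDerivAt (fun z => deriv G z ^ 2 - 2 * c * (G z - G x₀))
      (2 * deriv G y * (deriv (deriv G) y - c)) y :=
    (((hG' y).hasDerivAt.fun_pow 2).fun_sub
      (((hG y).hasDerivAt.sub_const (G x₀)).const_mul (2 * c))).congr_deriv (by push_cast; ring)
  have hlow := isMinOn_Icc_of_sub_mul_deriv_nonneg (fun y => (hW m y).differentiableAt) hx₀
    (fun y hy => by
      rw [(hW m y).deriv, show (y - x₀) * (2 * deriv G y * (deriv (deriv G) y - m)) =
        2 * ((y - x₀) * deriv G y) * (deriv (deriv G) y - m) by ring]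
      exact mul_nonneg (mul_nonneg zero_le_two (hsign y hy)) (sub_nonneg.2 (hbd y hy).1)) hx
  have hup := isMinOn_Icc_of_sub_mul_deriv_nonneg (fun y => (hW M y).fun_neg.differentiableAt) hx₀
    (fun y hy => by
      rw [(hW M y).fun_neg.deriv, show (y - x₀) * -(2 * deriv G y * (deriv (deriv G) y - M)) =
        2 * ((y - x₀) * deriv G y) * (M - deriv (deriv G) y) by ring]
      exact mul_nonneg (mul_nonneg zero_le_two (hsign y hy)) (sub_nonneg.2 (hbd y hy).2)) hx
  simp only [hcrit, sub_self, mul_zero, mem_ofPred_eq] at hlow hup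
  rw [habs]
  constructor <;> nlinarith

theorem sq_deriv_bounds_of_abs_deriv_deriv_mem_Icc {G : ℝ → ℝ} (hG : ContDiff ℝ 2 G) {m M : ℝ}
    (hm : 0 < m) (hbd : ∀ x ∈ Icc a b, m ≤ |deriv (deriv G) x| ∧ |deriv (deriv G) x| ≤ M)
    (hx₀ : x₀ ∈ Icc a b) (hcrit : deriv G x₀ = 0) (x : ℝ) (hx : x ∈ Icc a b) :
    2 * m * |G x - G x₀| ≤ deriv G x ^ 2 ∧ deriv G x ^ 2 ≤ 2 * M * |G x - G x₀| := by
  have hcont : ContinuousOn (deriv (deriv G)) (Icc a b) :=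
    (hG.deriv' (n := 1)).continuous_deriv_one.continuousOn
  rcases isPreconnected_Icc.forall_le_or_forall_le_neg_of_le_abs_s7 hcont hm
    (fun y hy => (hbd y hy).1) with hconvex | hconcave
  · exact sq_deriv_bounds_of_deriv_deriv_mem_Icc (hG.differentiable two_ne_zero)
      hG.differentiable_deriv_two hm.le
      (fun y hy => ⟨hconvex y hy, (le_abs_self _).trans (hbd y hy).2⟩) hx₀ hcrit x hx
  · have hneg : ContDiff ℝ 2 (-G) := hG.neg
    have hd : deriv (-G) = -deriv G := deriv.neg'
    have hdd : deriv (deriv (-G)) = -deriv (deriv G) := by rw [hd]; exact deriv.neg'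
    have := sq_deriv_bounds_of_deriv_deriv_mem_Icc (hneg.differentiable two_ne_zero)
      hneg.differentiable_deriv_two hm.le
      (fun y hy => by
        rw [hdd, Pi.neg_apply]
        exact ⟨le_neg.2 (hconcave y hy), (neg_le_abs _).trans (hbd y hy).2⟩)
      hx₀ (by rw [hd, Pi.neg_apply, hcrit, neg_zero]) x hx
    rwa [hd, Pi.neg_apply, Pi.neg_apply, Pi.neg_apply, neg_sq, ← neg_sub', abs_neg] at this

end

theorem deriv_deriv_mul_add_mul_add {f g : ℝ → ℝ} (hf : ContDiff ℝ 2 f) (hg : ContDiff ℝ 2 g)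
    (p q : ℝ) : deriv (deriv fun x => p * f x + q * x + g x) =
      fun x => p * deriv (deriv f) x + deriv (deriv g) x := by
  have hf' := hf.differentiable two_ne_zero
  have hg' := hg.differentiable two_ne_zero
  have hderiv : deriv (fun x => p * f x + q * x + g x) = fun x => p * deriv f x + q + deriv g x := by
    funext x
    exact (((hf' x).hasDerivAt.const_mul p).add
      ((hasDerivAt_id x).const_mul q |>.congr_deriv (mul_one q)) |>.add (hg' x).hasDerivAt).deriv
  funext x
  rw [hderiv]
  exact ((((hf.differentiable_deriv_two x).hasDerivAt.const_mul p).add_const q).add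
    (hg.differentiable_deriv_two x).hasDerivAt).deriv

theorem abs_mul_add_mem_Icc_of_abs_le {p u v c₁ c₂ L : ℝ} (hu : c₁ ≤ |u| ∧ |u| ≤ c₂)
    (hv : |v| ≤ L) (hp : 2 * L ≤ c₁ * |p|) :
    c₁ * |p| / 2 ≤ |p * u + v| ∧ |p * u + v| ≤ (c₁ / 2 + c₂) * |p| := by
  have hlow : |p| * c₁ ≤ |p| * |u| := mul_le_mul_of_nonneg_left hu.1 (abs_nonneg p)
  have hup : |p| * |u| ≤ |p| * c₂ := mul_le_mul_of_nonneg_left hu.2 (abs_nonneg p)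
  have htri₁ := abs_add_le (p * u) v
  have htri₂ := abs_sub_abs_le_abs_add (p * u) v
  rw [abs_mul] at htri₁ htri₂
  constructor <;> linarith

theorem abs_int_sub_div_four_le_abs_sub {u v : ℝ} {k k' : ℤ} (hne : k ≠ k')
    (hu : |u + k| < 1 / 4) (hv : |v + k'| ≤ 1 / 2) : |(k : ℝ) - k'| / 4 ≤ |u - v| := by
  have hone : (1 : ℝ) ≤ |(k : ℝ) - k'| := by exact_mod_cast Int.one_le_abs (sub_ne_zero.2 hne)
  have htri : |(k : ℝ) - k'| ≤ |u + k| + |v + k'| + |u - v| :=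
    calc |(k : ℝ) - k'| = |(u + k) - (v + k') - (u - v)| := by congr 1; ring
      _ ≤ |u + k| + |v + k'| + |u - v| := by
        linarith [abs_sub (u + k - (v + k')) (u - v), abs_sub (u + k) (v + k')]
  linarith

/-- **Lemma 2 (after Huang).** For `𝓕(x) = a₂ f(x) + a₁ x + λ(x)` with
`|a₂|` large, `𝓕'(x)² ≍ |a₂| |𝓕(x) - 𝓕(x₀)|` where `𝓕'(x₀) = 0`, and
`|𝓕(x) - 𝓕(x₀)| ≫ |a₀ - a₀'|`. -/
theorem F_deriv_sq_comparable_and_gap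
    (a b : ℝ) (hab : a ≤ b)
    (f lam : ℝ → ℝ) (hf : ContDiff ℝ 2 f) (hlam : ContDiff ℝ 2 lam)
    (c₁ c₂ : ℝ) (hc₁ : 0 < c₁)
    (hbound : ∀ x ∈ Icc a b, c₁ ≤ |deriv (deriv f) x| ∧ |deriv (deriv f) x| ≤ c₂) :
    ∃ C₁ > (0 : ℝ), ∃ C₂ > (0 : ℝ), ∃ T > (0 : ℝ),
      ∀ a₁ a₂ : ℤ, ∀ F : ℝ → ℝ,
        F = (fun x => (a₂ : ℝ) * f x + (a₁ : ℝ) * x + lam x) →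
        T ≤ |(a₂ : ℝ)| →
        ∀ x₀ ∈ Icc a b, deriv F x₀ = 0 →
          (∀ x ∈ Icc a b,
            C₁ * |(a₂ : ℝ)| * |F x - F x₀| ≤ (deriv F x) ^ 2 ∧
            (deriv F x) ^ 2 ≤ C₂ * |(a₂ : ℝ)| * |F x - F x₀|) ∧
          (∀ a₀ a₀' : ℤ, a₀ ≠ a₀' →
            |F x₀ + (a₀' : ℝ)| ≤ 1 / 2 →
            ∀ x ∈ Icc a b, |F x + (a₀ : ℝ)| < 1 / 4 →
              (|a₀ - a₀'| : ℝ) / 4 ≤ |F x - F x₀|) := by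
  obtain ⟨L, hL⟩ := isCompact_Icc.exists_bound_of_continuousOn
    ((hlam.deriv' (n := 1)).continuous_deriv_one.continuousOn (s := Icc a b))
  have hc₂ : c₁ ≤ c₂ := (hbound a ⟨le_rfl, hab⟩).1.trans (hbound a ⟨le_rfl, hab⟩).2
  refine ⟨c₁, hc₁, c₁ + 2 * c₂, by linarith, 2 * (|L| + 1) / c₁, by positivity, ?_⟩
  rintro a₁ a₂ F rfl hT x₀ hx₀ hcrit
  have hlarge : 2 * L ≤ c₁ * |(a₂ : ℝ)| := by
    rw [div_le_iff₀ hc₁] at hT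
    linarith [le_abs_self L]
  have ha₂ : 0 < |(a₂ : ℝ)| := lt_of_lt_of_le (by positivity) hT
  have hF : ContDiff ℝ 2 fun x => (a₂ : ℝ) * f x + (a₁ : ℝ) * x + lam x := by fun_prop
  refine ⟨fun x hx => ?_, fun a₀ a₀' hne h₀' x _ h₀ => abs_int_sub_div_four_le_abs_sub hne h₀ h₀'⟩
  have hcomp := sq_deriv_bounds_of_abs_deriv_deriv_mem_Icc hF
    (m := c₁ * |(a₂ : ℝ)| / 2) (M := (c₁ / 2 + c₂) * |(a₂ : ℝ)|) (half_pos (mul_pos hc₁ ha₂))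
    (fun y hy => by
      rw [deriv_deriv_mul_add_mul_add hf hlam]
      exact abs_mul_add_mem_Icc_of_abs_le (hbound y hy) (hL y hy) hlarge) hx₀ hcrit x hx
  constructor
  · convert hcomp.1 using 1
    ring
  · convert hcomp.2 using 1
    ring
end

section
/- Let A, B, C, D be integers with gcd(A, B, C) = 1 (in particular (A,B,C) ≠ (0,0,0)). Let p, q, r ∈ ℤ³ be three non-collinear integer points each lying on the plane {(x₁,x₂,x₃) ∈ ℝ³ : A x₁ + B x₂ + C x₃ = D}. Then the area of the triangle with vertices p, q, r is at least (1/2)·√(A² + B² + C²); equivalently, ‖(q − p) × (r − p)‖ ≥ √(A² + B² + C²), where × denotes the cross product in ℝ³. -/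
open MeasureTheory Set

/-- **Lemma 7 of [DB_inh_dim].** Any triangle with integer, non-collinear
vertices on the plane `Ax₁ + Bx₂ + Cx₃ = D` (with `gcd(A,B,C) = 1`) has area
at least `√(A² + B² + C²)/2`; equivalently the cross product of two edge
vectors has Euclidean norm at least `√(A² + B² + C²)`. -/
theorem integer_triangle_area_on_plane
    (A B C D : ℤ) (hgcd : Int.gcd (Int.gcd A B) C = 1)
    (p q r : Fin 3 → ℤ)
    (hp : A * p 0 + B * p 1 + C * p 2 = D)
    (hq : A * q 0 + B * q 1 + C * q 2 = D)
    (hr : A * r 0 + B * r 1 + C * r 2 = D)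
    (hncol : ¬ Collinear ℝ ({(fun i => (p i : ℝ)), (fun i => (q i : ℝ)),
      (fun i => (r i : ℝ))} : Set (Fin 3 → ℝ)))
    (u v : Fin 3 → ℤ) (hu : u = q - p) (hv : v = r - p) :
    Real.sqrt ((A : ℝ) ^ 2 + (B : ℝ) ^ 2 + (C : ℝ) ^ 2) ≤
      Real.sqrt (((u 1 * v 2 - u 2 * v 1 : ℤ) : ℝ) ^ 2 +
        ((u 2 * v 0 - u 0 * v 2 : ℤ) : ℝ) ^ 2 +
        ((u 0 * v 1 - u 1 * v 0 : ℤ) : ℝ) ^ 2) := by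
  -- edge vectors satisfy the homogeneous plane equation
  have hu0 : u 0 = q 0 - p 0 := by rw [hu]; rfl
  have hu1 : u 1 = q 1 - p 1 := by rw [hu]; rfl
  have hu2 : u 2 = q 2 - p 2 := by rw [hu]; rfl
  have hv0 : v 0 = r 0 - p 0 := by rw [hv]; rfl
  have hv1 : v 1 = r 1 - p 1 := by rw [hv]; rfl
  have hv2 : v 2 = r 2 - p 2 := by rw [hv]; rfl
  have hu' : A * u 0 + B * u 1 + C * u 2 = 0 := by
    rw [hu0, hu1, hu2]; linarith [hp, hq]
  have hv' : A * v 0 + B * v 1 + C * v 2 = 0 := by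
    rw [hv0, hv1, hv2]; linarith [hp, hr]
  set w1 : ℤ := u 1 * v 2 - u 2 * v 1 with hw1
  set w2 : ℤ := u 2 * v 0 - u 0 * v 2 with hw2
  set w3 : ℤ := u 0 * v 1 - u 1 * v 0 with hw3
  -- (A,B,C) × w = 0
  have hBC : B * w3 = C * w2 := by
    rw [hw2, hw3]; linear_combination u 0 * hv' - v 0 * hu'
  have hCA : C * w1 = A * w3 := by
    rw [hw1, hw3]; linear_combination u 1 * hv' - v 1 * hu'
  have hAB : A * w2 = B * w1 := by
    rw [hw1, hw2]; linear_combination u 2 * hv' - v 2 * hu'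
  -- Bezout
  have h1 := Int.gcd_eq_gcd_ab A B
  have h2 := Int.gcd_eq_gcd_ab (Int.gcd A B : ℤ) C
  rw [hgcd] at h2
  set x : ℤ := Int.gcdA A B * Int.gcdA (Int.gcd A B : ℤ) C with hx
  set y : ℤ := Int.gcdB A B * Int.gcdA (Int.gcd A B : ℤ) C with hy
  set z : ℤ := Int.gcdB (Int.gcd A B : ℤ) C with hz
  have hbez : x * A + y * B + z * C = 1 := by
    rw [hx, hy, hz]
    have : (1 : ℤ) = (Int.gcd A B : ℤ) * Int.gcdA (Int.gcd A B : ℤ) C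
        + C * Int.gcdB (Int.gcd A B : ℤ) C := by exact_mod_cast h2
    linear_combination -this - Int.gcdA (Int.gcd A B : ℤ) C * h1
  set k : ℤ := x * w1 + y * w2 + z * w3 with hk
  have hkA : w1 = A * k := by
    rw [hk]; linear_combination (-w1) * hbez - y * hAB + z * hCA
  have hkB : w2 = B * k := by
    rw [hk]; linear_combination (-w2) * hbez + x * hAB - z * hBC
  have hkC : w3 = C * k := by
    rw [hk]; linear_combination (-w3) * hbez - x * hCA + y * hBC
  -- w ≠ 0 from non-collinearity
  have hwne : ¬ (w1 = 0 ∧ w2 = 0 ∧ w3 = 0) := by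
    rintro ⟨h1', h2', h3'⟩
    apply hncol
    by_cases hu_zero : u = 0
    · have hpq : (fun i => (p i : ℝ)) = (fun i => (q i : ℝ)) := by
        funext i
        have h' : q i - p i = 0 := by
          have := congrFun hu_zero i
          rw [hu] at this
          simpa using this
        have : q i = p i := by omega
        rw [this]
      rw [← hpq]
      have : ({(fun i => (p i : ℝ)), (fun i => (p i : ℝ)),
          (fun i => (r i : ℝ))} : Set (Fin 3 → ℝ)) =
          {(fun i => (p i : ℝ)), (fun i => (r i : ℝ))} := by
        simp [Set.insert_comm, Set.pair_comm]
      rw [this]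
      exact collinear_pair ℝ _ _
    · obtain ⟨i, hi⟩ := Function.ne_iff.mp hu_zero
      have hi' : u i ≠ 0 := by simpa using hi
      have hrel : ∀ j, v j * u i = u j * v i := by
        intro j
        fin_cases i <;> fin_cases j <;> simp at hi' ⊢ <;> linarith
      rw [collinear_iff_of_mem (Set.mem_insert _ _)]
      refine ⟨(fun j => (u j : ℝ)), ?_⟩
      intro P hP
      rcases hP with hP | hP | hP
      · exact ⟨0, by rw [hP]; simp⟩
      · refine ⟨1, ?_⟩
        rw [hP]
        funext j
        have hqj : q j = u j + p j := by rw [hu]; ring_nf; simp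
        show (q j : ℝ) = (1 : ℝ) • (u j : ℝ) + (p j : ℝ)
        rw [hqj]
        push_cast
        rw [one_smul]
      · refine ⟨(v i : ℝ) / (u i : ℝ), ?_⟩
        rw [Set.mem_singleton_iff] at hP
        rw [hP]
        funext j
        have hrj : r j = v j + p j := by rw [hv]; ring_nf; simp
        have hui : (u i : ℝ) ≠ 0 := Int.cast_ne_zero.mpr hi'
        have hvj : (v j : ℝ) * (u i : ℝ) = (u j : ℝ) * (v i : ℝ) := by
          exact_mod_cast congrArg (Int.cast : ℤ → ℝ) (hrel j)
        show (r j : ℝ) = ((v i : ℝ) / (u i : ℝ)) * (u j : ℝ) + (p j : ℝ)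
        rw [hrj]
        push_cast
        field_simp
        linear_combination hvj
  have hkne : k ≠ 0 := by
    intro h0
    apply hwne
    rw [h0] at hkA hkB hkC
    simp at hkA hkB hkC
    exact ⟨hkA, hkB, hkC⟩
  have hk2 : 1 ≤ k ^ 2 := by
    have h := Int.one_le_abs hkne
    calc (1 : ℤ) = 1 * 1 := by ring
      _ ≤ |k| * |k| := mul_le_mul h h zero_le_one (abs_nonneg k)
      _ = k ^ 2 := by rw [abs_mul_abs_self]; ring
  have hineq : A ^ 2 + B ^ 2 + C ^ 2 ≤ w1 ^ 2 + w2 ^ 2 + w3 ^ 2 := by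
    have hs : (0 : ℤ) ≤ A ^ 2 + B ^ 2 + C ^ 2 := by positivity
    calc A ^ 2 + B ^ 2 + C ^ 2 = 1 * (A ^ 2 + B ^ 2 + C ^ 2) := by ring
      _ ≤ k ^ 2 * (A ^ 2 + B ^ 2 + C ^ 2) := mul_le_mul_of_nonneg_right hk2 hs
      _ = (A * k) ^ 2 + (B * k) ^ 2 + (C * k) ^ 2 := by ring
      _ = w1 ^ 2 + w2 ^ 2 + w3 ^ 2 := by rw [hkA, hkB, hkC]
  apply Real.sqrt_le_sqrt
  exact_mod_cast hineq
end

section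
/- Let n ∈ ℝ³ \ {0} and D ∈ ℝ, and let P := {a ∈ ℝ³ : ⟨n, a⟩ = D} be the corresponding affine plane. Let g₁, g₂ ∈ ℝ³, c₁, c₂ ∈ ℝ and t₁, t₂ > 0, and suppose det(g₁, g₂, n) ≠ 0, where det(g₁, g₂, n) denotes the determinant of the 3×3 matrix with rows g₁, g₂, n. Let R := {a ∈ ℝ³ : |⟨g₁, a⟩ + c₁| ≤ t₁ and |⟨g₂, a⟩ + c₂| ≤ t₂}. Then the area of P ∩ R equals 4·t₁·t₂·‖n‖ / |det(g₁, g₂, n)|; precisely, for any affine isometry φ : ℝ² → ℝ³ with image P, the two-dimensional Lebesgue measure of φ⁻¹(P ∩ R) equals 4 t₁ t₂ ‖n‖ / |det(g₁, g₂, n)|. -/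
/-!
Write `φ = L + φ 0` with `L` a linear isometry whose range is orthogonal to `n`. Pulled back by
`φ`, the region `R` is the preimage of an axis-parallel box of area `4 t₁ t₂` under the linear map
`A y = (⟪g₁, L y⟫, ⟪g₂, L y⟫)`, so its area is `4 t₁ t₂ / |det A|`. If `u, v` are the images under
`L` of the standard basis, then `w = u × v` is a unit normal of `P`, so `n = ⟪n, w⟫ w` with
`|⟪n, w⟫| = ‖n‖`, and `det (g₁, g₂, n) = ⟪n, w⟫ ⟪g₁ × g₂, w⟫ = ⟪n, w⟫ det A` by the Binet–Cauchy
identity.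
-/

open Matrix MeasureTheory Set
open scoped RealInnerProductSpace

theorem det_sq_eq_of_orthonormal_perp {R : Type*} [CommRing R] {u v : Fin 3 → R}
    (hu : u ⬝ᵥ u = 1) (hv : v ⬝ᵥ v = 1) (huv : u ⬝ᵥ v = 0) {n : Fin 3 → R}
    (hnu : n ⬝ᵥ u = 0) (hnv : n ⬝ᵥ v = 0) (g₁ g₂ : Fin 3 → R) :
    det ![g₁, g₂, n] ^ 2
      = (n ⬝ᵥ n) * ((g₁ ⬝ᵥ u) * (g₂ ⬝ᵥ v) - (g₁ ⬝ᵥ v) * (g₂ ⬝ᵥ u)) ^ 2 := by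
  set w := u ⨯₃ v
  have hw : w ⬝ᵥ w = 1 := by
    rw [cross_dot_cross, hu, hv, huv, dotProduct_comm v u, huv]; ring
  have hnw : n = (n ⬝ᵥ w) • w := by
    have hnw_cross : n ⨯₃ w = 0 := by
      rw [cross_cross_eq_smul_sub_smul', hnv, dotProduct_comm u n, hnu, zero_smul, zero_smul,
        sub_zero]
    have h := cross_cross_eq_smul_sub_smul' w n w
    rw [hnw_cross, map_zero, hw, one_smul] at h
    exact sub_eq_zero.mp h.symm
  have hn_dot (x : Fin 3 → R) : n ⬝ᵥ x = (n ⬝ᵥ w) * (w ⬝ᵥ x) := by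
    conv_lhs => rw [hnw]
    rw [smul_dotProduct, smul_eq_mul]
  have hdet : det ![g₁, g₂, n] = (n ⬝ᵥ w) * ((g₁ ⨯₃ g₂) ⬝ᵥ w) := by
    rw [← triple_product_eq_det, triple_product_permutation, triple_product_permutation,
      hn_dot, dotProduct_comm w]
  rw [hdet, ← cross_dot_cross, hn_dot n, dotProduct_comm w n]
  ring

namespace EuclideanSpace

theorem abs_det_eq_norm_mul_of_orthonormal_perp {u v n : EuclideanSpace ℝ (Fin 3)}
    (hu : ⟪u, u⟫ = 1) (hv : ⟪v, v⟫ = 1) (huv : ⟪u, v⟫ = 0) (hnu : ⟪n, u⟫ = 0) (hnv : ⟪n, v⟫ = 0)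
    (g₁ g₂ : EuclideanSpace ℝ (Fin 3)) :
    |det ![WithLp.ofLp g₁, WithLp.ofLp g₂, WithLp.ofLp n]|
      = ‖n‖ * |⟪g₁, u⟫ * ⟪g₂, v⟫ - ⟪g₁, v⟫ * ⟪g₂, u⟫| := by
  have hdot (x y : EuclideanSpace ℝ (Fin 3)) : ⟪x, y⟫ = WithLp.ofLp x ⬝ᵥ WithLp.ofLp y := by
    rw [inner_eq_star_dotProduct, star_trivial, dotProduct_comm]
  rw [← abs_norm, ← abs_mul, ← sq_eq_sq_iff_abs_eq_abs, mul_pow, ← real_inner_self_eq_norm_sq]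
  simp only [hdot] at hu hv huv hnu hnv ⊢
  exact det_sq_eq_of_orthonormal_perp hu hv huv hnu hnv _ _

variable {ι : Type*} [Fintype ι]

theorem volume_setOf_abs_add_le (d t : ι → ℝ) :
    volume {z : EuclideanSpace ℝ ι | ∀ i, |z i + d i| ≤ t i}
      = ∏ i, ENNReal.ofReal (2 * t i) := by
  have hbox : {z : EuclideanSpace ℝ ι | ∀ i, |z i + d i| ≤ t i}
      = WithLp.ofLp ⁻¹' univ.pi fun i => Icc (-d i - t i) (-d i + t i) := by
    ext z
    simp only [mem_ofPred_eq, mem_preimage, mem_univ_pi, mem_Icc, abs_le]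
    refine forall_congr' fun i => ?_
    constructor <;> rintro ⟨h₁, h₂⟩ <;> constructor <;> linarith
  rw [hbox, (PiLp.volume_preserving_ofLp ι).measure_preimage
    (MeasurableSet.univ_pi fun _ => measurableSet_Icc).nullMeasurableSet, volume_pi_pi]
  simp only [Real.volume_Icc]
  congr! 2
  ring

theorem volume_preimage_linearMap_setOf_abs_add_le
    (A : EuclideanSpace ℝ ι →ₗ[ℝ] EuclideanSpace ℝ ι) (hA : LinearMap.det A ≠ 0) (d t : ι → ℝ) :
    volume {y | ∀ i, |A y i + d i| ≤ t i}
      = ENNReal.ofReal |(LinearMap.det A)⁻¹| * ∏ i, ENNReal.ofReal (2 * t i) := by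
  rw [← volume_setOf_abs_add_le d t]
  exact Measure.addHaar_preimage_linearMap volume hA {z | ∀ i, |z i + d i| ≤ t i}

end EuclideanSpace

section innerCoords

variable {ι F : Type*} [NormedAddCommGroup F] [InnerProductSpace ℝ F]

noncomputable def innerCoords (g : ι → F) : F →ₗ[ℝ] EuclideanSpace ℝ ι :=
  (WithLp.linearEquiv 2 ℝ (ι → ℝ)).symm.toLinearMap ∘ₗ LinearMap.pi fun i => innerₛₗ ℝ (g i)

@[simp]
theorem innerCoords_apply (g : ι → F) (x : F) (i : ι) : innerCoords g x i = ⟪g i, x⟫ := rfl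

theorem det_innerCoords_comp [Fintype ι] [DecidableEq ι] (g : ι → F)
    (L : EuclideanSpace ℝ ι →ₗ[ℝ] F) :
    LinearMap.det (innerCoords g ∘ₗ L)
      = (Matrix.of fun i j => ⟪g i, L (EuclideanSpace.single j 1)⟫).det := by
  rw [← LinearMap.det_toMatrix (EuclideanSpace.basisFun ι ℝ).toBasis]
  rfl

end innerCoords

theorem AffineIsometry.inner_linearIsometry_eq_zero {E F : Type*} [NormedAddCommGroup E]
    [InnerProductSpace ℝ E] [NormedAddCommGroup F] [InnerProductSpace ℝ F]
    (φ : E →ᵃⁱ[ℝ] F) {n : F} {D : ℝ} (hφ : range φ ⊆ {x | ⟪n, x⟫ = D}) (y : E) :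
    ⟪n, φ.linearIsometry y⟫ = 0 := by
  have h := φ.map_vsub y 0
  rw [vsub_eq_sub, vsub_eq_sub, sub_zero] at h
  rw [h, inner_sub_right, hφ (mem_range_self y), hφ (mem_range_self 0), sub_self]

theorem plane_slab_intersection_area_general
    (nv : EuclideanSpace ℝ (Fin 3)) (D : ℝ)
    (P : Set (EuclideanSpace ℝ (Fin 3)))
    (hP : P = {x : EuclideanSpace ℝ (Fin 3) | ⟪nv, x⟫ = D})
    (g₁ g₂ : EuclideanSpace ℝ (Fin 3)) (c₁ c₂ t₁ t₂ : ℝ)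
    (ht₁ : 0 < t₁) (ht₂ : 0 < t₂)
    (M : Matrix (Fin 3) (Fin 3) ℝ)
    (hM : M = Matrix.of ![(fun j => g₁ j), (fun j => g₂ j), (fun j => nv j)])
    (hdet : M.det ≠ 0)
    (R : Set (EuclideanSpace ℝ (Fin 3)))
    (hR : R = {x : EuclideanSpace ℝ (Fin 3) | |⟪g₁, x⟫ + c₁| ≤ t₁ ∧ |⟪g₂, x⟫ + c₂| ≤ t₂})
    (φ : EuclideanSpace ℝ (Fin 2) →ᵃⁱ[ℝ] EuclideanSpace ℝ (Fin 3))
    (hφ : Set.range φ = P) :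
    volume (φ ⁻¹' (P ∩ R)) = ENNReal.ofReal (4 * t₁ * t₂ * ‖nv‖ / |M.det|) := by
  set L := φ.linearIsometry
  set A := innerCoords ![g₁, g₂] ∘ₗ L.toLinearMap
  have hperp := φ.inner_linearIsometry_eq_zero (hφ.trans hP).le
  have hdetM : |M.det| = ‖nv‖ * |LinearMap.det A| := by
    have hL (i j : Fin 2) : ⟪L (EuclideanSpace.single i 1), L (EuclideanSpace.single j 1)⟫
        = if i = j then 1 else 0 := by
      simp [L.inner_map_map, EuclideanSpace.inner_single_left]
    rw [det_innerCoords_comp, det_fin_two, hM]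
    exact EuclideanSpace.abs_det_eq_norm_mul_of_orthonormal_perp (hL 0 0) (hL 1 1) (hL 0 1)
      (hperp _) (hperp _) g₁ g₂
  obtain ⟨hnv, hA⟩ := mul_ne_zero_iff.mp (hdetM ▸ abs_ne_zero.mpr hdet)
  have hpre : φ ⁻¹' (P ∩ R)
      = {y | ∀ i, |A y i + (⟪![g₁, g₂] i, φ 0⟫ + ![c₁, c₂] i)| ≤ ![t₁, t₂] i} := by
    rw [preimage_inter, preimage_eq_univ_iff.mpr hφ.le, univ_inter, hR]
    ext y
    have hy : φ y = L y + φ 0 := by simpa using φ.map_vadd 0 y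
    simp [Fin.forall_fin_two, A, hy, inner_add_right, add_assoc]
  rw [hpre, EuclideanSpace.volume_preimage_linearMap_setOf_abs_add_le A (abs_ne_zero.mp hA),
    Fin.prod_univ_two, cons_val_one, cons_val_zero, cons_val_zero, ← ENNReal.ofReal_mul (by positivity),
    ← ENNReal.ofReal_mul (abs_nonneg _), hdetM, abs_inv]
  congr 1
  field_simp
  ring

/-- **Area of the intersection of a plane with a parallelepiped slab**
(cf. [DB_inh_dim], p. 346). The plane `P = {⟨n,a⟩ = D}` meets the region
`R = {|⟨g₁,a⟩ + c₁| ≤ t₁, |⟨g₂,a⟩ + c₂| ≤ t₂}` in a set of area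
`4 t₁ t₂ ‖n‖ / |det(g₁,g₂,n)|`, area being measured via any affine isometry
`φ : ℝ² → ℝ³` with image `P`. -/
theorem plane_slab_intersection_area
    (nv : EuclideanSpace ℝ (Fin 3)) (hnv : nv ≠ 0) (D : ℝ)
    (P : Set (EuclideanSpace ℝ (Fin 3)))
    (hP : P = {x : EuclideanSpace ℝ (Fin 3) | ⟪nv, x⟫ = D})
    (g₁ g₂ : EuclideanSpace ℝ (Fin 3)) (c₁ c₂ t₁ t₂ : ℝ)
    (ht₁ : 0 < t₁) (ht₂ : 0 < t₂)
    (M : Matrix (Fin 3) (Fin 3) ℝ)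
    (hM : M = Matrix.of ![(fun j => g₁ j), (fun j => g₂ j), (fun j => nv j)])
    (hdet : M.det ≠ 0)
    (R : Set (EuclideanSpace ℝ (Fin 3)))
    (hR : R = {x : EuclideanSpace ℝ (Fin 3) | |⟪g₁, x⟫ + c₁| ≤ t₁ ∧ |⟪g₂, x⟫ + c₂| ≤ t₂})
    (φ : EuclideanSpace ℝ (Fin 2) →ᵃⁱ[ℝ] EuclideanSpace ℝ (Fin 3))
    (hφ : Set.range φ = P) :
    volume (φ ⁻¹' (P ∩ R)) = ENNReal.ofReal (4 * t₁ * t₂ * ‖nv‖ / |M.det|) :=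
  plane_slab_intersection_area_general nv D P hP g₁ g₂ c₁ c₂ t₁ t₂ ht₁ ht₂ M hM hdet R hR φ hφ
end

section
/- Let I ⊂ ℝ be a compact interval, let f : I → ℝ be C² with 0 < c₁ ≤ |f''(x)| ≤ c₂ for all x ∈ I, and let δ ∈ (0,1). Then there exists a constant K > 0, depending only on f, I and δ, such that for every real r ≥ 1 and every nonzero integer β₂ with |β₂| ≤ r, the number of integer pairs (β₀, β₁) with max(|β₀|, |β₁|) ≤ r for which there exists x ∈ I satisfying both |β₂ f(x) + β₁ x + β₀| ≤ r^{−δ} and |β₂ f'(x) + β₁| ≤ r^{−δ} is at most K·|β₂|. -/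
open Set

/-!
Since `|f''| ≥ c₁ > 0` and derivatives have the intermediate value property, `f''` has constant
sign on `I`, so `f'` is monotone there, and so is `g'` for `g t = β₂ * f t + β₁ * t`. If `x ≤ y`
both satisfy `|g'| ≤ ε`, monotonicity gives `|g'| ≤ ε` on all of `[x, y]`, hence
`|g y - g x| ≤ ε * |I|`; the two values `β₀, β₀'` making `g + β₀` small at `x` and `g + β₀'`
small at `y` then differ by at most `ε * (|I| + 2)`. So each `β₁` admits `O(1)` values of `β₀`,
and `|β₁| ≤ |β₂| * sup |f'| + 1` leaves `O(|β₂|)` values of `β₁`.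
-/

theorem monotoneOn_or_antitoneOn_of_deriv_ne_zero {g : ℝ → ℝ} {s : Set ℝ} (hs : Convex ℝ s)
    (hg : ∀ x ∈ s, DifferentiableAt ℝ g x) (h : ∀ x ∈ s, deriv g x ≠ 0) :
    MonotoneOn g s ∨ AntitoneOn g s := by
  have hcont : ContinuousOn g s := fun x hx => (hg x hx).continuousAt.continuousWithinAt
  rcases hasDerivWithinAt_forall_lt_or_forall_gt_of_forall_ne hs
    (fun x hx => (hg x hx).hasDerivAt.hasDerivWithinAt) h with hneg | hpos
  · exact .inr (strictAntiOn_of_deriv_neg hs hcont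
      fun x hx => hneg x (interior_subset hx)).antitoneOn
  · exact .inl (strictMonoOn_of_deriv_pos hs hcont
      fun x hx => hpos x (interior_subset hx)).monotoneOn

theorem monotoneOn_or_antitoneOn_const_mul_add {φ : ℝ → ℝ} {s : Set ℝ}
    (h : MonotoneOn φ s ∨ AntitoneOn φ s) (c d : ℝ) :
    MonotoneOn (fun t => c * φ t + d) s ∨ AntitoneOn (fun t => c * φ t + d) s := by
  rcases le_total 0 c with hc | hc <;> rcases h with h | h
  · exact .inl fun x hx y hy hxy => by simpa using mul_le_mul_of_nonneg_left (h hx hy hxy) hc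
  · exact .inr fun x hx y hy hxy => by simpa using mul_le_mul_of_nonneg_left (h hx hy hxy) hc
  · exact .inr fun x hx y hy hxy => by simpa using mul_le_mul_of_nonpos_left (h hx hy hxy) hc
  · exact .inl fun x hx y hy hxy => by simpa using mul_le_mul_of_nonpos_left (h hx hy hxy) hc

theorem abs_le_on_Icc_of_monotoneOn_or_antitoneOn {φ : ℝ → ℝ} {x y ε : ℝ}
    (h : MonotoneOn φ (Icc x y) ∨ AntitoneOn φ (Icc x y)) (hx : |φ x| ≤ ε) (hy : |φ y| ≤ ε) :
    ∀ t ∈ Icc x y, |φ t| ≤ ε := by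
  intro t ht
  have hxy : x ≤ y := ht.1.trans ht.2
  have hxI : x ∈ Icc x y := left_mem_Icc.2 hxy
  have hyI : y ∈ Icc x y := right_mem_Icc.2 hxy
  rw [abs_le] at hx hy ⊢
  rcases h with h | h
  · have := h hxI ht ht.1; have := h ht hyI ht.2; constructor <;> linarith
  · have := h hxI ht ht.1; have := h ht hyI ht.2; constructor <;> linarith

theorem abs_sub_le_of_deriv_monotoneOn_or_antitoneOn {g g' : ℝ → ℝ} {x y ε : ℝ} (hxy : x ≤ y)
    (hg : ∀ t ∈ Icc x y, HasDerivAt g (g' t) t)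
    (hg' : MonotoneOn g' (Icc x y) ∨ AntitoneOn g' (Icc x y))
    (hx : |g' x| ≤ ε) (hy : |g' y| ≤ ε) : |g y - g x| ≤ ε * (y - x) :=
  norm_image_sub_le_of_norm_deriv_le_segment' (fun t ht => (hg t ht).hasDerivWithinAt)
    (fun t ht => abs_le_on_Icc_of_monotoneOn_or_antitoneOn hg' hx hy t (Ico_subset_Icc_self ht))
    y (right_mem_Icc.2 hxy)

theorem abs_sub_le_of_near_double_roots {f : ℝ → ℝ} {a b ε β₂ β₁ β₀ β₀' x y : ℝ}
    (hf : Differentiable ℝ f)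
    (hf' : MonotoneOn (deriv f) (Icc a b) ∨ AntitoneOn (deriv f) (Icc a b))
    (hx : x ∈ Icc a b) (hy : y ∈ Icc a b)
    (hx₀ : |β₂ * f x + β₁ * x + β₀| ≤ ε) (hx₁ : |β₂ * deriv f x + β₁| ≤ ε)
    (hy₀ : |β₂ * f y + β₁ * y + β₀'| ≤ ε) (hy₁ : |β₂ * deriv f y + β₁| ≤ ε) :
    |β₀ - β₀'| ≤ ε * (b - a + 2) := by
  wlog hxy : x ≤ y generalizing x y β₀ β₀'
  · rw [abs_sub_comm]
    exact this hy hx hy₀ hy₁ hx₀ hx₁ (le_of_not_ge hxy)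
  have hsub : Icc x y ⊆ Icc a b := Icc_subset_Icc hx.1 hy.2
  have hmvt := abs_sub_le_of_deriv_monotoneOn_or_antitoneOn (g := fun t => β₂ * f t + β₁ * t) hxy
    (fun t _ => by simpa only [mul_one] using
      ((hf t).hasDerivAt.const_mul β₂).fun_add ((hasDerivAt_id' t).const_mul β₁))
    ((monotoneOn_or_antitoneOn_const_mul_add hf' β₂ β₁).imp (·.mono hsub) (·.mono hsub)) hx₁ hy₁
  have hε : 0 ≤ ε := (abs_nonneg _).trans hx₁
  have hlen : ε * (y - x) ≤ ε * (b - a) :=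
    mul_le_mul_of_nonneg_left (by linarith [hx.1, hy.2]) hε
  rw [abs_le] at hmvt hx₀ hy₀ ⊢
  constructor <;> nlinarith

theorem Int.abs_le_natFloor_of_abs_cast_le {k : ℤ} {B : ℝ} (h : |(k : ℝ)| ≤ B) :
    |k| ≤ (⌊B⌋₊ : ℤ) := by
  have : k.natAbs ≤ ⌊B⌋₊ := Nat.le_floor (by rwa [Nat.cast_natAbs, Int.cast_abs])
  rw [Int.abs_eq_natAbs]
  exact_mod_cast this

theorem Int.card_Icc_neg_self (n : ℕ) : (Finset.Icc (-(n : ℤ)) n).card = 2 * n + 1 := by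
  rw [Int.card_Icc]; omega

theorem Set.finite_and_ncard_le_of_abs_snd_le_of_abs_fst_sub_le {S : Set (ℤ × ℤ)} {A B : ℝ}
    (hA : 0 ≤ A) (hB : 0 ≤ B) (hsnd : ∀ p ∈ S, |(p.2 : ℝ)| ≤ B)
    (hfst : ∀ p ∈ S, ∀ q ∈ S, p.2 = q.2 → |(p.1 : ℝ) - q.1| ≤ A) :
    S.Finite ∧ (S.ncard : ℝ) ≤ (2 * A + 1) * (2 * B + 1) := by
  -- measure each row from a chosen base point `base k` of that row
  let base : ℤ → ℤ := fun k => (Classical.epsilon fun p : ℤ × ℤ => p ∈ S ∧ p.2 = k).1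
  have hbase : ∀ p ∈ S, ∃ q ∈ S, q.2 = p.2 ∧ q.1 = base p.2 := fun p hp =>
    have hspec := Classical.epsilon_spec (p := fun q : ℤ × ℤ => q ∈ S ∧ q.2 = p.2) ⟨p, hp, rfl⟩
    ⟨_, hspec.1, hspec.2, rfl⟩
  let φ : ℤ × ℤ → ℤ × ℤ := fun p => (p.2, p.1 - base p.2)
  let T : Finset (ℤ × ℤ) := Finset.Icc (-(⌊B⌋₊ : ℤ)) ⌊B⌋₊ ×ˢ Finset.Icc (-(⌊A⌋₊ : ℤ)) ⌊A⌋₊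
  have hmaps : MapsTo φ S T := by
    intro p hp
    obtain ⟨q, hq, hqp, hqbase⟩ := hbase p hp
    have h₂ := Int.abs_le_natFloor_of_abs_cast_le (hsnd p hp)
    have h₁ := Int.abs_le_natFloor_of_abs_cast_le (k := p.1 - base p.2)
      (by simpa [hqbase] using hfst p hp q hq hqp.symm)
    simp only [T, φ, Finset.coe_product, Finset.coe_Icc, mem_prod, mem_Icc]
    rw [abs_le] at h₁ h₂
    exact ⟨h₂, h₁⟩
  have hinj : InjOn φ S := fun p _ q _ h => by
    obtain ⟨h₂, h₁⟩ := Prod.mk.inj h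
    rw [h₂] at h₁
    exact Prod.ext (by linarith) h₂
  refine ⟨.of_injOn hmaps hinj T.finite_toSet, ?_⟩
  have hcard : S.ncard ≤ (2 * ⌊B⌋₊ + 1) * (2 * ⌊A⌋₊ + 1) := by
    refine (ncard_le_ncard_of_injOn φ hmaps hinj).trans_eq ?_
    rw [ncard_coe_finset, Finset.card_product, Int.card_Icc_neg_self, Int.card_Icc_neg_self]
  calc (S.ncard : ℝ) ≤ (2 * ⌊B⌋₊ + 1) * (2 * ⌊A⌋₊ + 1) := by exact_mod_cast hcard
    _ ≤ (2 * B + 1) * (2 * A + 1) := by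
      gcongr <;> exact Nat.floor_le ‹_›
    _ = (2 * A + 1) * (2 * B + 1) := mul_comm _ _

theorem counting_beta_pairs_general
    (a b : ℝ) (hab : a ≤ b)
    (f : ℝ → ℝ) (hf : ContDiff ℝ 2 f)
    (c₁ c₂ : ℝ) (hc₁ : 0 < c₁)
    (hbound : ∀ x ∈ Icc a b, c₁ ≤ |deriv (deriv f) x| ∧ |deriv (deriv f) x| ≤ c₂)
    (δ : ℝ) (hδ0 : 0 < δ) :
    ∃ K > (0 : ℝ), ∀ r : ℝ, 1 ≤ r → ∀ β₂ : ℤ, β₂ ≠ 0 → (|β₂| : ℝ) ≤ r →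
      ∀ S : Set (ℤ × ℤ),
        S = {p : ℤ × ℤ | (max |p.1| |p.2| : ℝ) ≤ r ∧ ∃ x ∈ Icc a b,
          |(β₂ : ℝ) * f x + (p.2 : ℝ) * x + (p.1 : ℝ)| ≤ r ^ (-δ) ∧
          |(β₂ : ℝ) * deriv f x + (p.2 : ℝ)| ≤ r ^ (-δ)} →
        S.Finite ∧ (S.ncard : ℝ) ≤ K * (|β₂| : ℝ) := by
  obtain ⟨M, hM⟩ := isCompact_Icc.exists_bound_of_continuousOn (s := Icc a b)
    (hf.continuous_deriv (by norm_num)).continuousOn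
  have hM0 : 0 ≤ M := (norm_nonneg _).trans (hM a (left_mem_Icc.2 hab))
  have hf' : MonotoneOn (deriv f) (Icc a b) ∨ AntitoneOn (deriv f) (Icc a b) :=
    monotoneOn_or_antitoneOn_of_deriv_ne_zero (convex_Icc a b)
      (fun x _ => hf.differentiable_deriv_two x)
      (fun x hx => abs_pos.1 (hc₁.trans_le (hbound x hx).1))
  refine ⟨(2 * (b - a + 2) + 1) * (2 * M + 3), by positivity, ?_⟩
  intro r hr β₂ hβ₂ _ S hS
  have hε : r ^ (-δ) ≤ 1 := Real.rpow_le_one_of_one_le_of_nonpos hr (by linarith)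
  have hβ₂1 : (1 : ℝ) ≤ |(β₂ : ℝ)| := by exact_mod_cast Int.one_le_abs hβ₂
  have hcount := Set.finite_and_ncard_le_of_abs_snd_le_of_abs_fst_sub_le
    (S := S) (A := b - a + 2) (B := M * |(β₂ : ℝ)| + 1) (by linarith) (by positivity) ?_ ?_
  · exact ⟨hcount.1, hcount.2.trans (by nlinarith)⟩
  · intro p hp
    obtain ⟨-, x, hx, -, hx₁⟩ := hS ▸ hp
    calc |(p.2 : ℝ)| = |(β₂ * deriv f x + p.2) - β₂ * deriv f x| := by ring_nf
      _ ≤ |β₂ * deriv f x + p.2| + |β₂ * deriv f x| := abs_sub _ _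
      _ ≤ 1 + |(β₂ : ℝ)| * M := by
        rw [abs_mul]
        exact add_le_add (hx₁.trans hε) (mul_le_mul_of_nonneg_left (hM x hx) (abs_nonneg _))
      _ = M * |(β₂ : ℝ)| + 1 := by ring
  · intro p hp q hq hpq
    obtain ⟨-, x, hx, hx₀, hx₁⟩ := hS ▸ hp
    obtain ⟨-, y, hy, hy₀, hy₁⟩ := hS ▸ hq
    rw [hpq] at hx₀ hx₁
    exact (abs_sub_le_of_near_double_roots (hf.differentiable (by norm_num)) hf' hx hy
      hx₀ hx₁ hy₀ hy₁).trans (mul_le_of_le_one_left (by linarith) hε)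

/-- **Counting lemma ([DB_inh_dim], p. 349).** For nonzero `β₂` with `|β₂| ≤ r`,
the number of integer pairs `(β₀, β₁)` with `max(|β₀|,|β₁|) ≤ r` for which the
system `|β₂f(x) + β₁x + β₀| ≤ r^(-δ)`, `|β₂f'(x) + β₁| ≤ r^(-δ)` has a solution
`x ∈ I` is `≪ |β₂|`. -/
theorem counting_beta_pairs
    (a b : ℝ) (hab : a ≤ b)
    (f : ℝ → ℝ) (hf : ContDiff ℝ 2 f)
    (c₁ c₂ : ℝ) (hc₁ : 0 < c₁)
    (hbound : ∀ x ∈ Icc a b, c₁ ≤ |deriv (deriv f) x| ∧ |deriv (deriv f) x| ≤ c₂)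
    (δ : ℝ) (hδ0 : 0 < δ) (hδ1 : δ < 1) :
    ∃ K > (0 : ℝ), ∀ r : ℝ, 1 ≤ r → ∀ β₂ : ℤ, β₂ ≠ 0 → (|β₂| : ℝ) ≤ r →
      ∀ S : Set (ℤ × ℤ),
        S = {p : ℤ × ℤ | (max |p.1| |p.2| : ℝ) ≤ r ∧ ∃ x ∈ Icc a b,
          |(β₂ : ℝ) * f x + (p.2 : ℝ) * x + (p.1 : ℝ)| ≤ r ^ (-δ) ∧
          |(β₂ : ℝ) * deriv f x + (p.2 : ℝ)| ≤ r ^ (-δ)} →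
        S.Finite ∧ (S.ncard : ℝ) ≤ K * (|β₂| : ℝ) :=
  counting_beta_pairs_general a b hab f hf c₁ c₂ hc₁ hbound δ hδ0
end

section
/- Let s ∈ (0,1], let I ⊂ ℝ be a compact interval, let f, λ : I → ℝ be C¹ functions, and set M := sup_{x∈I}(|f'(x)| + |λ'(x)|). Let ψ be an approximating function with ∑_{q=1}^∞ ψ(q)^s q^{2−s} < ∞. For (a₀, a₁, a₂) ∈ ℤ³ define Δ(a₀,a₁,a₂) := {x ∈ I : |a₂ f(x) + a₁ x + a₀ + λ(x)| < ψ(max(|a₁|, |a₂|))}. Then ∑ |Δ(a₀,a₁,a₂)|^s < ∞, where the sum is over all triples (a₀, a₁, a₂) ∈ ℤ³ with a₁ ≠ 0 and |a₁| > 4M|a₂|, and |Δ(a₀,a₁,a₂)| denotes the Lebesgue measure of Δ(a₀,a₁,a₂). -/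
/-!
On the region `|a₁| > 4M|a₂|` the derivative `a₂ f' + a₁ + λ'` of the form
`F(x) = a₂ f(x) + a₁ x + a₀ + λ(x)` stays within `|a₁|/4 + M` of `a₁`. Hence `F` varies by
`O(|a₁|)` on `I`, so only `O(|a₁|)` values of `a₀` give a nonempty `Δ(a₀,a₁,a₂)`; and if
`|a₁| ≥ 2M` then `|F'| ≥ |a₁|/4`, so `Δ(a₀,a₁,a₂)` has diameter at most `8ψ(q)/|a₁|`,
where `q = max(|a₁|,|a₂|)`. Summing over `a₀` gives `O(q^(1-s) ψ(q)^s)`, and since exactly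
`8q` pairs `(a₁,a₂)` have `max(|a₁|,|a₂|) = q`, the sum over all pairs is
`O(∑ q^(2-s) ψ(q)^s)`. The pairs with `|a₁| < 2M` force `a₂ = 0` and are finitely many.
-/

open MeasureTheory Set

theorem mul_abs_sub_le_abs_sub_of_le_abs_deriv {g g' : ℝ → ℝ} {a b c u v : ℝ}
    (hg : ∀ x, HasDerivAt g (g' x) x) (hc : ∀ y ∈ Icc a b, c ≤ |g' y|)
    (hu : u ∈ Icc a b) (hv : v ∈ Icc a b) : c * |v - u| ≤ |g v - g u| := by
  wlog huv : u < v generalizing u v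
  · rcases (not_lt.1 huv).eq_or_lt with rfl | hvu
    · simp
    · simpa only [abs_sub_comm] using this hv hu hvu
  obtain ⟨w, hw, hslope⟩ := exists_hasDerivAt_eq_slope g g' huv
    (fun y _ => (hg y).continuousAt.continuousWithinAt) (fun y _ => hg y)
  have hvu : 0 < v - u := sub_pos.2 huv
  calc c * |v - u| = c * (v - u) := by rw [abs_of_pos hvu]
    _ ≤ |g' w| * (v - u) :=
      mul_le_mul_of_nonneg_right (hc w ⟨hu.1.trans hw.1.le, hw.2.le.trans hv.2⟩) hvu.le
    _ = |g v - g u| := by rw [hslope, abs_div, abs_of_pos hvu, div_mul_cancel₀ _ hvu.ne']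

theorem volume_abs_lt_le_of_le_abs_deriv {g g' : ℝ → ℝ} {a b c : ℝ}
    (hg : ∀ x, HasDerivAt g (g' x) x) (hc₀ : 0 < c) (hc : ∀ y ∈ Icc a b, c ≤ |g' y|) (ε : ℝ) :
    volume {x ∈ Icc a b | |g x| < ε} ≤ ENNReal.ofReal (2 * ε / c) := by
  refine (Real.volume_le_diam _).trans (Metric.ediam_le fun u hu v hv => ?_)
  rw [edist_dist, Real.dist_eq]
  refine ENNReal.ofReal_le_ofReal ((le_div_iff₀ hc₀).2 ?_)
  have := mul_abs_sub_le_abs_sub_of_le_abs_deriv hg hc hv.1 hu.1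
  have := abs_sub (g u) (g v)
  linarith [hu.2, hv.2]

theorem Int.tsum_le_of_abs_add_le {u : ℤ → ENNReal} {B : ENNReal} {c r : ℝ}
    (hu : ∀ k, u k ≠ 0 → |k + c| ≤ r) (hB : ∀ k, u k ≤ B) :
    ∑' k, u k ≤ ENNReal.ofReal (2 * r + 1) * B := by
  set S := Finset.Icc ⌈-c - r⌉ ⌊-c + r⌋
  have hS : ∀ k ∉ S, u k = 0 := by
    intro k hk
    by_contra hk0
    obtain ⟨h₁, h₂⟩ := abs_le.1 (hu k hk0)
    exact hk (Finset.mem_Icc.2 ⟨Int.ceil_le.2 (by linarith), Int.le_floor.2 (by linarith)⟩)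
  have hcard : (S.card : ENNReal) ≤ ENNReal.ofReal (2 * r + 1) := by
    rw [Int.card_Icc]
    rcases Nat.eq_zero_or_pos (⌊-c + r⌋ + 1 - ⌈-c - r⌉).toNat with h | h
    · simp [h]
    rw [ENNReal.natCast_le_ofReal h.ne', ← Int.cast_natCast, Int.toNat_of_nonneg (by omega)]
    push_cast
    linarith [Int.le_ceil (-c - r), Int.floor_le (-c + r)]
  calc ∑' k, u k = ∑ k ∈ S, u k := tsum_eq_sum hS
    _ ≤ S.card * B := by simpa using Finset.sum_le_card_nsmul S u B (fun k _ => hB k)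
    _ ≤ ENNReal.ofReal (2 * r + 1) * B := by gcongr

open Finset in
theorem Int.tsum_natAbs_max_le (φ : ℕ → ENNReal) :
    ∑' p : ℤ × ℤ, φ (max p.1.natAbs p.2.natAbs) ≤ φ 0 + 8 * ∑' k : ℕ, k * φ k := by
  have hfiber (k : ℕ) :
      (fun p : ℤ × ℤ => max p.1.natAbs p.2.natAbs) ⁻¹' {k} = ↑(box k : Finset (ℤ × ℤ)) := by
    ext p; simp
  have hbox (k : ℕ) : (#(box k : Finset (ℤ × ℤ)) : ENNReal) * φ k ≤
      (if k = 0 then φ 0 else 0) + 8 * (k * φ k) := by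
    rcases eq_or_ne k 0 with rfl | hk
    · simp
    · simp [hk, Int.card_box hk, mul_assoc]
  rw [← ENNReal.tsum_fiberwise _ (fun p : ℤ × ℤ => max p.1.natAbs p.2.natAbs)]
  calc ∑' k : ℕ, ∑' p : (fun p : ℤ × ℤ => max p.1.natAbs p.2.natAbs) ⁻¹' {k},
        φ (max (p : ℤ × ℤ).1.natAbs (p : ℤ × ℤ).2.natAbs)
      = ∑' k : ℕ, (#(box k : Finset (ℤ × ℤ)) : ENNReal) * φ k := by
        refine tsum_congr fun k => ?_
        rw [tsum_congr fun p => congrArg φ p.2, ENNReal.tsum_set_const, hfiber,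
          Set.encard_coe_eq_coe_finsetCard]
        rfl
    _ ≤ ∑' k : ℕ, ((if k = 0 then φ 0 else 0) + 8 * (k * φ k)) := ENNReal.tsum_le_tsum hbox
    _ = φ 0 + 8 * ∑' k : ℕ, k * φ k := by rw [ENNReal.tsum_add, tsum_ite_eq, ENNReal.tsum_mul_left]

theorem mul_div_rpow_le_rpow_mul {n q x s : ℝ} (hn : 0 < n) (hnq : n ≤ q) (hx : 0 ≤ x)
    (hs1 : s ≤ 1) : n * (x / n) ^ s ≤ q ^ (1 - s) * x ^ s := by
  have h : n * (x / n) ^ s = n ^ (1 - s) * x ^ s := by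
    rw [Real.div_rpow hx hn.le, Real.rpow_sub hn, Real.rpow_one]
    ring
  rw [h]
  gcongr

theorem tsum_natCast_mul_ofReal_lt_top {s c : ℝ} (hs1 : s ≤ 1) (hc : 0 ≤ c) {ψ : ℕ → ℝ}
    (hψ : ∀ n, 0 ≤ ψ n) (hsum : Summable fun q : ℕ => ψ q ^ s * (q : ℝ) ^ (2 - s)) :
    ∑' k : ℕ, (k : ENNReal) * ENNReal.ofReal ((k : ℝ) ^ (1 - s) * (c * ψ k) ^ s) < ⊤ := by
  have hk (k : ℕ) : (k : ENNReal) * ENNReal.ofReal ((k : ℝ) ^ (1 - s) * (c * ψ k) ^ s) =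
      ENNReal.ofReal (c ^ s * (ψ k ^ s * (k : ℝ) ^ (2 - s))) := by
    rw [← ENNReal.ofReal_natCast, ← ENNReal.ofReal_mul k.cast_nonneg, Real.mul_rpow hc (hψ k),
      show 2 - s = 1 + (1 - s) by ring, Real.rpow_one_add' k.cast_nonneg (by linarith)]
    ring_nf
  rw [tsum_congr hk, ← ENNReal.ofReal_tsum_of_nonneg (fun k => by have := hψ k; positivity)
    (hsum.mul_left _)]
  exact ENNReal.ofReal_lt_top

theorem abs_mul_add_le_of_abs_add_abs_le {u v α β M : ℝ} (huv : |u| + |v| ≤ M)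
    (h : 4 * M * |β| < |α|) : |β * u + v| ≤ |α| / 4 + M := by
  have hM : 0 ≤ M := (add_nonneg (abs_nonneg u) (abs_nonneg v)).trans huv
  calc |β * u + v| ≤ |β| * |u| + |v| := by rw [← abs_mul]; exact abs_add_le _ _
    _ ≤ (|β| + 1) * M := by nlinarith [abs_nonneg β, abs_nonneg u, abs_nonneg v]
    _ ≤ |α| / 4 + M := by linarith

theorem Int.eq_zero_of_mul_abs_lt {M : ℝ} {a₁ a₂ : ℤ} (hreg : 4 * M * |(a₂ : ℝ)| < |(a₁ : ℝ)|)
    (hsmall : |(a₁ : ℝ)| < 2 * M) : a₂ = 0 := by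
  by_contra h
  have : (1 : ℝ) ≤ |(a₂ : ℝ)| := by exact_mod_cast Int.one_le_abs h
  nlinarith [abs_nonneg (a₁ : ℝ)]

def inhomForm (f lam : ℝ → ℝ) (a₀ a₁ a₂ x : ℝ) : ℝ := a₂ * f x + a₁ * x + a₀ + lam x

section
variable {f lam f' lam' : ℝ → ℝ} {a b M : ℝ}

theorem hasDerivAt_inhomForm (hf : ∀ x, HasDerivAt f (f' x) x)
    (hlam : ∀ x, HasDerivAt lam (lam' x) x) (a₀ a₁ a₂ y : ℝ) :
    HasDerivAt (inhomForm f lam a₀ a₁ a₂) (a₂ * f' y + a₁ + lam' y) y := by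
  have := ((((hf y).const_mul a₂).add ((hasDerivAt_id y).const_mul a₁)).add_const a₀).add (hlam y)
  rwa [mul_one] at this

theorem volume_inhomForm_lt_le (hf : ∀ x, HasDerivAt f (f' x) x)
    (hlam : ∀ x, HasDerivAt lam (lam' x) x) (hM : ∀ x ∈ Icc a b, |f' x| + |lam' x| ≤ M)
    {a₀ a₁ a₂ : ℝ} (ha₁ : a₁ ≠ 0) (hreg : 4 * M * |a₂| < |a₁|) (hlarge : 2 * M ≤ |a₁|) (ε : ℝ) :
    volume {x ∈ Icc a b | |inhomForm f lam a₀ a₁ a₂ x| < ε} ≤ ENNReal.ofReal (8 * ε / |a₁|) := by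
  have hderiv : ∀ y ∈ Icc a b, |a₁| / 4 ≤ |a₂ * f' y + a₁ + lam' y| := by
    intro y hy
    have := abs_mul_add_le_of_abs_add_abs_le (hM y hy) hreg
    have := abs_sub_abs_le_abs_sub a₁ (-(a₂ * f' y + lam' y))
    rw [abs_neg, show a₁ - -(a₂ * f' y + lam' y) = a₂ * f' y + a₁ + lam' y by ring] at this
    linarith
  convert volume_abs_lt_le_of_le_abs_deriv (hasDerivAt_inhomForm hf hlam a₀ a₁ a₂)
    (by positivity) hderiv ε using 2
  field_simp
  ring

theorem abs_add_inhomForm_le (hf : ∀ x, HasDerivAt f (f' x) x)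
    (hlam : ∀ x, HasDerivAt lam (lam' x) x) (hM : ∀ x ∈ Icc a b, |f' x| + |lam' x| ≤ M)
    {a₀ a₁ a₂ ε x : ℝ} (hreg : 4 * M * |a₂| < |a₁|) (hx : x ∈ Icc a b)
    (hlt : |inhomForm f lam a₀ a₁ a₂ x| < ε) :
    |a₀ + inhomForm f lam 0 a₁ a₂ a| ≤ ε + (2 * |a₁| + M) * (b - a) := by
  set g := inhomForm f lam 0 a₁ a₂
  have hM0 : 0 ≤ M := (add_nonneg (abs_nonneg _) (abs_nonneg _)).trans (hM x hx)
  have hgx : inhomForm f lam a₀ a₁ a₂ x = a₀ + g x := by simp only [g, inhomForm]; ring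
  have hlip : |g x - g a| ≤ (2 * |a₁| + M) * (x - a) := by
    refine norm_image_sub_le_of_norm_deriv_le_segment'
      (fun y _ => (hasDerivAt_inhomForm hf hlam 0 a₁ a₂ y).hasDerivWithinAt) (fun y hy => ?_) x hx
    have := abs_mul_add_le_of_abs_add_abs_le (hM y (Ico_subset_Icc_self hy)) hreg
    rw [Real.norm_eq_abs, show a₂ * f' y + a₁ + lam' y = a₁ + (a₂ * f' y + lam' y) by ring]
    linarith [abs_add_le a₁ (a₂ * f' y + lam' y), abs_nonneg a₁]
  have hxb : (2 * |a₁| + M) * (x - a) ≤ (2 * |a₁| + M) * (b - a) :=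
    mul_le_mul_of_nonneg_left (by linarith [hx.2]) (by positivity)
  rw [hgx] at hlt
  have := abs_sub (a₀ + g x) (g x - g a)
  rw [show a₀ + g x - (g x - g a) = a₀ + g a by ring] at this
  linarith

theorem tsum_volume_inhomForm_rpow_le (hab : a ≤ b) (hf : ∀ x, HasDerivAt f (f' x) x)
    (hlam : ∀ x, HasDerivAt lam (lam' x) x) (hM : ∀ x ∈ Icc a b, |f' x| + |lam' x| ≤ M)
    {s ε ε₀ : ℝ} {B : ENNReal} (hs : 0 < s) {a₁ a₂ : ℤ} (ha₁ : a₁ ≠ 0)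
    (hreg : 4 * M * |(a₂ : ℝ)| < |(a₁ : ℝ)|) (hε : 0 ≤ ε) (hεε₀ : ε ≤ ε₀)
    (hB : ∀ a₀ : ℤ, volume {x ∈ Icc a b | |inhomForm f lam a₀ a₁ a₂ x| < ε} ≤ B) :
    ∑' a₀ : ℤ, volume {x ∈ Icc a b | |inhomForm f lam a₀ a₁ a₂ x| < ε} ^ s ≤
      ENNReal.ofReal (|(a₁ : ℝ)| * (2 * ε₀ + (4 + 2 * M) * (b - a) + 1)) * B ^ s := by
  refine (Int.tsum_le_of_abs_add_le (c := inhomForm f lam 0 a₁ a₂ a)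
    (r := ε + (2 * |(a₁ : ℝ)| + M) * (b - a)) (fun a₀ h => ?_)
    (fun a₀ => ENNReal.rpow_le_rpow (hB a₀) hs.le)).trans ?_
  · obtain ⟨x, hx, hlt⟩ := nonempty_of_measure_ne_zero fun h0 => h (by
      rw [h0, ENNReal.zero_rpow_of_pos hs])
    exact abs_add_inhomForm_le hf hlam hM hreg hx hlt
  · have hM0 : 0 ≤ M := (add_nonneg (abs_nonneg _) (abs_nonneg _)).trans (hM a ⟨le_rfl, hab⟩)
    have ha₁' : (1 : ℝ) ≤ |(a₁ : ℝ)| := by exact_mod_cast Int.one_le_abs ha₁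
    gcongr
    nlinarith [mul_nonneg hM0 (sub_nonneg.2 hab)]

end

def approxSet (f lam : ℝ → ℝ) (a b : ℝ) (ψ : ℕ → ℝ) (t : ℤ × ℤ × ℤ) : Set ℝ :=
  {x ∈ Icc a b | |inhomForm f lam t.1 t.2.1 t.2.2 x| < ψ (max t.2.1.natAbs t.2.2.natAbs)}

section
variable {f lam f' lam' : ℝ → ℝ} {a b M s : ℝ} {ψ : ℕ → ℝ}

theorem tsum_volume_approxSet_rpow_le_of_large (hs0 : 0 < s) (hs1 : s ≤ 1) (hab : a ≤ b)
    (hf : ∀ x, HasDerivAt f (f' x) x) (hlam : ∀ x, HasDerivAt lam (lam' x) x)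
    (hM : ∀ x ∈ Icc a b, |f' x| + |lam' x| ≤ M) (hψpos : ∀ n, 0 < ψ n) (hψanti : Antitone ψ)
    {a₁ a₂ : ℤ} (ha₁ : a₁ ≠ 0) (hreg : 4 * M * |(a₂ : ℝ)| < |(a₁ : ℝ)|)
    (hlarge : 2 * M ≤ |(a₁ : ℝ)|) :
    ∑' a₀ : ℤ, volume (approxSet f lam a b ψ (a₀, a₁, a₂)) ^ s ≤
      ENNReal.ofReal (2 * ψ 0 + (4 + 2 * M) * (b - a) + 1) *
        ENNReal.ofReal ((max a₁.natAbs a₂.natAbs : ℕ) ^ (1 - s) *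
          (8 * ψ (max a₁.natAbs a₂.natAbs)) ^ s) := by
  set q := max a₁.natAbs a₂.natAbs
  have hC₀ : 0 ≤ 2 * ψ 0 + (4 + 2 * M) * (b - a) + 1 := by
    have hM0 : 0 ≤ M := (add_nonneg (abs_nonneg _) (abs_nonneg _)).trans (hM a ⟨le_rfl, hab⟩)
    have := hψpos 0
    nlinarith [mul_nonneg hM0 (sub_nonneg.2 hab)]
  have ha₁q : |(a₁ : ℝ)| ≤ q := by
    rw [Nat.cast_max, Nat.cast_natAbs, Int.cast_abs]
    exact le_max_left _ _
  calc ∑' a₀ : ℤ, volume (approxSet f lam a b ψ (a₀, a₁, a₂)) ^ s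
      ≤ ENNReal.ofReal (|(a₁ : ℝ)| * (2 * ψ 0 + (4 + 2 * M) * (b - a) + 1)) *
          ENNReal.ofReal (8 * ψ q / |(a₁ : ℝ)|) ^ s :=
        tsum_volume_inhomForm_rpow_le hab hf hlam hM hs0 ha₁ hreg (hψpos q).le (hψanti q.zero_le)
          fun a₀ => volume_inhomForm_lt_le hf hlam hM (Int.cast_ne_zero.2 ha₁) hreg hlarge _
    _ = ENNReal.ofReal (2 * ψ 0 + (4 + 2 * M) * (b - a) + 1) *
          ENNReal.ofReal (|(a₁ : ℝ)| * (8 * ψ q / |(a₁ : ℝ)|) ^ s) := by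
        rw [ENNReal.ofReal_rpow_of_nonneg (by have := hψpos q; positivity) hs0.le, mul_comm |_|,
          ENNReal.ofReal_mul hC₀, ENNReal.ofReal_mul (abs_nonneg _), mul_assoc]
    _ ≤ _ := mul_le_mul_right (ENNReal.ofReal_le_ofReal (mul_div_rpow_le_rpow_mul
        (by positivity) ha₁q (by have := hψpos q; positivity) hs1)) _

theorem tsum_volume_approxSet_rpow_le_of_small (hs0 : 0 < s) (hab : a ≤ b)
    (hf : ∀ x, HasDerivAt f (f' x) x) (hlam : ∀ x, HasDerivAt lam (lam' x) x)
    (hM : ∀ x ∈ Icc a b, |f' x| + |lam' x| ≤ M) (hψpos : ∀ n, 0 < ψ n) (hψanti : Antitone ψ)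
    {a₁ a₂ : ℤ} (ha₁ : a₁ ≠ 0) (hreg : 4 * M * |(a₂ : ℝ)| < |(a₁ : ℝ)|)
    (hsmall : |(a₁ : ℝ)| < 2 * M) :
    ∑' a₀ : ℤ, volume (approxSet f lam a b ψ (a₀, a₁, a₂)) ^ s ≤
      ENNReal.ofReal (2 * M * (2 * ψ 0 + (4 + 2 * M) * (b - a) + 1)) *
        ENNReal.ofReal (b - a) ^ s := by
  have hC₀ : 0 ≤ 2 * ψ 0 + (4 + 2 * M) * (b - a) + 1 := by
    have hM0 : 0 ≤ M := by linarith [abs_nonneg (a₁ : ℝ)]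
    have := hψpos 0
    nlinarith [mul_nonneg hM0 (sub_nonneg.2 hab)]
  refine (tsum_volume_inhomForm_rpow_le (ε := ψ (max a₁.natAbs a₂.natAbs))
    (B := ENNReal.ofReal (b - a)) hab hf hlam hM hs0 ha₁ hreg
    (hψpos _).le (hψanti (Nat.zero_le _)) fun a₀ => ?_).trans ?_
  · rw [← Real.volume_Icc]
    exact measure_mono fun x hx => hx.1
  · gcongr

theorem tsum_volume_approxSet_rpow_lt_top (hs0 : 0 < s) (hs1 : s ≤ 1) (hab : a ≤ b)
    (hf : ∀ x, HasDerivAt f (f' x) x) (hlam : ∀ x, HasDerivAt lam (lam' x) x)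
    (hM : ∀ x ∈ Icc a b, |f' x| + |lam' x| ≤ M) (hψpos : ∀ n, 0 < ψ n) (hψanti : Antitone ψ)
    (hsum : Summable fun q : ℕ => ψ q ^ s * (q : ℝ) ^ (2 - s)) :
    ∑' t : {t : ℤ × ℤ × ℤ // t.2.1 ≠ 0 ∧ 4 * M * |(t.2.2 : ℝ)| < |(t.2.1 : ℝ)|},
      volume (approxSet f lam a b ψ t) ^ s < ⊤ := by
  set R : Set (ℤ × ℤ × ℤ) := {t | t.2.1 ≠ 0 ∧ 4 * M * |(t.2.2 : ℝ)| < |(t.2.1 : ℝ)|}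
  set C₀ := 2 * ψ 0 + (4 + 2 * M) * (b - a) + 1
  set φ : ℕ → ENNReal := fun k => ENNReal.ofReal ((k : ℝ) ^ (1 - s) * (8 * ψ k) ^ s)
  set S : Set (ℤ × ℤ) := Icc (-⌈2 * M⌉) ⌈2 * M⌉ ×ˢ {0}
  set T := ENNReal.ofReal (2 * M * C₀) * ENNReal.ofReal (b - a) ^ s
  have hpair (p : ℤ × ℤ) :
      ∑' a₀ : ℤ, R.indicator (fun t => volume (approxSet f lam a b ψ t) ^ s) (a₀, p) ≤
        S.indicator (fun _ => T) p + ENNReal.ofReal C₀ * φ (max p.1.natAbs p.2.natAbs) := by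
    obtain ⟨a₁, a₂⟩ := p
    by_cases hR : a₁ ≠ 0 ∧ 4 * M * |(a₂ : ℝ)| < |(a₁ : ℝ)|
    · simp only [indicator_of_mem (show (_, a₁, a₂) ∈ R from hR)]
      rcases le_or_gt (2 * M) |(a₁ : ℝ)| with hlarge | hsmall
      · exact (tsum_volume_approxSet_rpow_le_of_large hs0 hs1 hab hf hlam hM hψpos hψanti
          hR.1 hR.2 hlarge).trans le_add_self
      · have hS : (a₁, a₂) ∈ S := by
          refine ⟨mem_Icc.2 (abs_le.1 ?_), Int.eq_zero_of_mul_abs_lt hR.2 hsmall⟩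
          exact_mod_cast (Int.cast_abs (R := ℝ) ▸ hsmall.le).trans (Int.le_ceil _)
        rw [indicator_of_mem hS]
        exact (tsum_volume_approxSet_rpow_le_of_small hs0 hab hf hlam hM hψpos hψanti
          hR.1 hR.2 hsmall).trans le_self_add
    · simp [indicator_of_notMem (show (_, a₁, a₂) ∉ R from hR)]
  have hS : (S.encard : ENNReal) ≠ ⊤ := by
    simpa using (finite_Icc (-⌈2 * M⌉) ⌈2 * M⌉).prod (finite_singleton (0 : ℤ))
  have hT : T ≠ ⊤ := by finiteness
  have hφ : ∑' k : ℕ, k * φ k ≠ ⊤ :=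
    (tsum_natCast_mul_ofReal_lt_top hs1 (by norm_num) (fun n => (hψpos n).le) hsum).ne
  change ∑' t : R, volume (approxSet f lam a b ψ t) ^ s < ⊤
  rw [tsum_subtype R fun t => volume (approxSet f lam a b ψ t) ^ s, ENNReal.tsum_prod',
    ENNReal.tsum_comm]
  calc ∑' (p : ℤ × ℤ) (a₀ : ℤ),
        R.indicator (fun t => volume (approxSet f lam a b ψ t) ^ s) (a₀, p)
      ≤ ∑' p : ℤ × ℤ, (S.indicator (fun _ => T) p +
          ENNReal.ofReal C₀ * φ (max p.1.natAbs p.2.natAbs)) := ENNReal.tsum_le_tsum hpair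
    _ = S.encard * T + ENNReal.ofReal C₀ * ∑' p : ℤ × ℤ, φ (max p.1.natAbs p.2.natAbs) := by
        rw [ENNReal.tsum_add, ← tsum_subtype, ENNReal.tsum_set_const, ENNReal.tsum_mul_left]
    _ ≤ S.encard * T + ENNReal.ofReal C₀ * (φ 0 + 8 * ∑' k : ℕ, k * φ k) := by
        gcongr
        exact Int.tsum_natAbs_max_le φ
    _ < ⊤ := by finiteness

end

theorem case_I_volume_sum_converges_general
    (s : ℝ) (hs0 : 0 < s) (hs1 : s ≤ 1)
    (a b : ℝ) (hab : a ≤ b)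
    (f lam : ℝ → ℝ) (hf : ContDiff ℝ 1 f) (hlam : ContDiff ℝ 1 lam)
    (M : ℝ) (hM : M = sSup ((fun x => |deriv f x| + |deriv lam x|) '' Icc a b))
    (ψ : ℕ → ℝ) (hψpos : ∀ n, 0 < ψ n) (hψanti : Antitone ψ)
    (hsum : Summable fun q : ℕ => ψ q ^ s * (q : ℝ) ^ (2 - s))
    (Δ : ℤ × ℤ × ℤ → Set ℝ)
    (hΔ : ∀ t : ℤ × ℤ × ℤ, Δ t = {x ∈ Icc a b |
      |(t.2.2 : ℝ) * f x + (t.2.1 : ℝ) * x + (t.1 : ℝ) + lam x| <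
        ψ (max t.2.1.natAbs t.2.2.natAbs)}) :
    ∑' p : {t : ℤ × ℤ × ℤ // t.2.1 ≠ 0 ∧ 4 * M * (|t.2.2| : ℝ) < (|t.2.1| : ℝ)},
      (volume (Δ p.1)) ^ s < ⊤ := by
  have hMb : ∀ x ∈ Icc a b, |deriv f x| + |deriv lam x| ≤ M := fun x hx =>
    hM ▸ le_csSup (isCompact_Icc.image_of_continuousOn ((hf.continuous_deriv le_rfl).abs.add
      (hlam.continuous_deriv le_rfl).abs).continuousOn).bddAbove (mem_image_of_mem _ hx)
  obtain rfl : Δ = approxSet f lam a b ψ := funext hΔ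
  exact tsum_volume_approxSet_rpow_lt_top hs0 hs1 hab
    (fun x => (hf.differentiable one_ne_zero x).hasDerivAt)
    (fun x => (hlam.differentiable one_ne_zero x).hasDerivAt) hMb hψpos hψanti hsum

/-- **Case I of the proof of the main theorem.** If `∑ ψ(q)^s q^(2-s) < ∞`,
then the volume sum `∑ |Δ(a₀,a₁,a₂)|^s` over all triples with `a₁ ≠ 0` and
`|a₁| > 4M|a₂|` converges. -/
theorem case_I_volume_sum_converges
    (s : ℝ) (hs0 : 0 < s) (hs1 : s ≤ 1)
    (a b : ℝ) (hab : a ≤ b)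
    (f lam : ℝ → ℝ) (hf : ContDiff ℝ 1 f) (hlam : ContDiff ℝ 1 lam)
    (M : ℝ) (hM : M = sSup ((fun x => |deriv f x| + |deriv lam x|) '' Icc a b))
    (ψ : ℕ → ℝ) (hψpos : ∀ n, 0 < ψ n) (hψanti : Antitone ψ)
    (hψ0 : Filter.Tendsto ψ Filter.atTop (nhds 0))
    (hsum : Summable fun q : ℕ => ψ q ^ s * (q : ℝ) ^ (2 - s))
    (Δ : ℤ × ℤ × ℤ → Set ℝ)
    (hΔ : ∀ t : ℤ × ℤ × ℤ, Δ t = {x ∈ Icc a b |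
      |(t.2.2 : ℝ) * f x + (t.2.1 : ℝ) * x + (t.1 : ℝ) + lam x| <
        ψ (max t.2.1.natAbs t.2.2.natAbs)}) :
    ∑' p : {t : ℤ × ℤ × ℤ // t.2.1 ≠ 0 ∧ 4 * M * (|t.2.2| : ℝ) < (|t.2.1| : ℝ)},
      (volume (Δ p.1)) ^ s < ⊤ :=
  case_I_volume_sum_converges_general s hs0 hs1 a b hab f lam hf hlam M hM ψ hψpos hψanti hsum Δ hΔ
end

section
/- Let I ⊂ ℝ be a compact interval and let f, λ : I → ℝ be C² functions with 0 < c₁ ≤ |f''(x)| ≤ c₂ for all x ∈ I. Then there exist constants C > 0 and T > 0, depending only on c₁, c₂ and sup_{x∈I}|λ''(x)|, with the following property. Let (a₁, a₂) ∈ ℤ² with |a₂| ≥ T, set 𝓕(x) := a₂ f(x) + a₁ x + λ(x), suppose x₀ ∈ I satisfies 𝓕'(x₀) = 0, and let a₀' ∈ ℤ satisfy |𝓕(x₀) + a₀'| ≤ 1/2. Let a₀ ∈ ℤ with a₀ ≠ a₀' and let 0 < η ≤ 1/4. Then the Lebesgue measure of the set {x ∈ I : |𝓕(x) + a₀| < η}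 is at most C·η / √(|a₂|·|a₀ − a₀'|). -/
/-!
Once `|a₂|` dominates `sup |λ''|`, the phase `𝓕 = a₂ f + a₁ x + λ` satisfies
`|a₂| c₁ / 2 ≤ |𝓕''| ≤ |a₂| (c₂ + c₁ / 2)`, and `𝓕''`, being continuous, has constant sign; after
multiplying by `±1` the phase is uniformly convex with critical point `x₀`. As `a₀ ≠ a₀'`, the level
`-a₀` lies at distance `≥ |a₀ - a₀'| / 2` from `𝓕 x₀`, while `|𝓕 x - 𝓕 x₀| ≤ M (x - x₀)²`; so the
set `{|𝓕 + a₀| < η}` avoids a neighbourhood of radius `δ ≍ √(|a₀ - a₀'| / |a₂|)` of `x₀`, outside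
of which `|𝓕'| ≥ m δ`. On each side of `x₀` the set thus has diameter at most `2η / (m δ)`.
-/

open MeasureTheory Set

theorem exists_abs_eq_one_forall_le_mul {X : Type*} [TopologicalSpace X] {s : Set X}
    {g : X → ℝ} {c : ℝ} (hs : IsPreconnected s) (hg : ContinuousOn g s) (hc : 0 < c)
    (h : ∀ x ∈ s, c ≤ |g x|) : ∃ ε : ℝ, |ε| = 1 ∧ ∀ x ∈ s, c ≤ ε * g x := by
  by_cases hpos : ∀ x ∈ s, c ≤ g x
  · exact ⟨1, abs_one, by simpa using hpos⟩
  push Not at hpos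
  obtain ⟨x, hx, hgx⟩ := hpos
  have hgx' : g x ≤ -c := by cases le_abs'.mp (h x hx) <;> linarith
  refine ⟨-1, by simp, fun y hy => ?_⟩
  rcases le_abs'.mp (h y hy) with hgy | hgy
  · linarith
  · obtain ⟨z, hz, hgz⟩ := hs.intermediate_value hx hy hg
      (show (0 : ℝ) ∈ Icc (g x) (g y) from ⟨by linarith, by linarith⟩)
    have := h z hz
    rw [hgz, abs_zero] at this
    linarith

theorem Real.volume_le_ofReal_of_forall_sub_le {s : Set ℝ} {L : ℝ}
    (h : ∀ x ∈ s, ∀ y ∈ s, x ≤ y → y - x ≤ L) : volume s ≤ ENNReal.ofReal L := by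
  refine (Real.volume_le_diam s).trans (Metric.ediam_le fun x hx y hy => ?_)
  rw [edist_dist, Real.dist_eq]
  refine ENNReal.ofReal_le_ofReal ?_
  rcases le_total x y with hxy | hyx
  · rw [abs_sub_comm, abs_of_nonneg (by linarith)]; exact h x hx y hy hxy
  · rw [abs_of_nonneg (by linarith)]; exact h y hy x hx hyx

theorem volume_abs_sub_lt_le_of_le_deriv {G : ℝ → ℝ} {J : Set ℝ} {κ c η : ℝ}
    (hJ : Convex ℝ J) (hG : Differentiable ℝ G) (hκ : 0 < κ) (hG' : ∀ x ∈ J, κ ≤ deriv G x) :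
    volume {x ∈ J | |G x - c| < η} ≤ ENNReal.ofReal (2 * η / κ) := by
  refine Real.volume_le_ofReal_of_forall_sub_le fun x ⟨hxJ, hx⟩ y ⟨hyJ, hy⟩ hxy => ?_
  have hslope := hJ.mul_sub_le_image_sub_of_le_deriv hG.continuous.continuousOn
    hG.differentiableOn (fun t ht => hG' t (interior_subset ht)) x hxJ y hyJ hxy
  rw [le_div_iff₀ hκ]
  linarith [abs_lt.mp hx, abs_lt.mp hy]

theorem deriv_deriv_phase {f lam : ℝ → ℝ} (hf : ContDiff ℝ 2 f) (hlam : ContDiff ℝ 2 lam)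
    (a₁ a₂ : ℝ) :
    deriv (deriv fun x => a₂ * f x + a₁ * x + lam x) =
      fun x => a₂ * deriv (deriv f) x + deriv (deriv lam) x := by
  have hfirst : deriv (fun x => a₂ * f x + a₁ * x + lam x) =
      fun x => a₂ * deriv f x + a₁ + deriv lam x := funext fun x => by
    simpa using ((((hf.differentiable two_ne_zero x).hasDerivAt.const_mul a₂).fun_add
      ((hasDerivAt_id x).const_mul a₁)).fun_add
      (hlam.differentiable two_ne_zero x).hasDerivAt).deriv
  rw [hfirst]
  funext x
  simpa using ((((hf.differentiable_deriv_two x).hasDerivAt.const_mul a₂).add_const a₁).fun_add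
    (hlam.differentiable_deriv_two x).hasDerivAt).deriv

theorem abs_mul_add_bounds {t g h c₁ c₂ S : ℝ} (hg : c₁ ≤ |g| ∧ |g| ≤ c₂) (hh : |h| ≤ S)
    (hS : S ≤ |t| * c₁ / 2) :
    |t| * c₁ / 2 ≤ |t * g + h| ∧ |t * g + h| ≤ |t| * (c₂ + c₁ / 2) := by
  have htg : |t| * c₁ ≤ |t * g| := by
    rw [abs_mul]; exact mul_le_mul_of_nonneg_left hg.1 (abs_nonneg t)
  have htg' : |t * g| ≤ |t| * c₂ := by
    rw [abs_mul]; exact mul_le_mul_of_nonneg_left hg.2 (abs_nonneg t)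
  constructor
  · have htri := abs_sub (t * g + h) h
    rw [add_sub_cancel_right] at htri
    linarith
  · linarith [abs_add_le (t * g) h]

section Critical

variable {G : ℝ → ℝ} {a b x₀ m M : ℝ}

theorem mul_sub_le_deriv_of_critical (hG : ContDiff ℝ 2 G) (hcrit : deriv G x₀ = 0)
    (hx₀ : x₀ ∈ Icc a b) (hm : ∀ x ∈ Icc a b, m ≤ deriv (deriv G) x) {x : ℝ}
    (hx : x ∈ Icc a b) (hxx₀ : x₀ ≤ x) : m * (x - x₀) ≤ deriv G x := by
  simpa [hcrit] using (convex_Icc a b).mul_sub_le_image_sub_of_le_deriv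
    hG.differentiable_deriv_two.continuous.continuousOn
    hG.differentiable_deriv_two.differentiableOn
    (fun t ht => hm t (interior_subset ht)) x₀ hx₀ x hx hxx₀

theorem deriv_le_mul_sub_of_critical (hG : ContDiff ℝ 2 G) (hcrit : deriv G x₀ = 0)
    (hx₀ : x₀ ∈ Icc a b) (hm : ∀ x ∈ Icc a b, m ≤ deriv (deriv G) x) {x : ℝ}
    (hx : x ∈ Icc a b) (hxx₀ : x ≤ x₀) : deriv G x ≤ m * (x - x₀) := by
  have := (convex_Icc a b).mul_sub_le_image_sub_of_le_deriv
    hG.differentiable_deriv_two.continuous.continuousOn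
    hG.differentiable_deriv_two.differentiableOn
    (fun t ht => hm t (interior_subset ht)) x hx x₀ hx₀ hxx₀
  rw [hcrit] at this
  linarith

theorem abs_sub_le_mul_sq_of_critical (hG : ContDiff ℝ 2 G) (hcrit : deriv G x₀ = 0)
    (hx₀ : x₀ ∈ Icc a b) (hM : ∀ x ∈ Icc a b, |deriv (deriv G) x| ≤ M) {x : ℝ}
    (hx : x ∈ Icc a b) : |G x - G x₀| ≤ M * (x - x₀) ^ 2 := by
  have hM₀ : 0 ≤ M := (abs_nonneg _).trans (hM x₀ hx₀)
  have hslope : ∀ t ∈ Icc a b, |deriv G t| ≤ M * |t - x₀| := fun t ht => by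
    simpa [hcrit] using (convex_Icc a b).norm_image_sub_le_of_norm_deriv_le
      (fun t _ => hG.differentiable_deriv_two t) hM hx₀ ht
  have hsegment : ∀ t ∈ uIcc x₀ x, |deriv G t| ≤ M * |x - x₀| := fun t ht =>
    (hslope t (uIcc_subset_Icc hx₀ hx ht)).trans
      (mul_le_mul_of_nonneg_left (abs_sub_left_of_mem_uIcc ht) hM₀)
  have := (convex_uIcc x₀ x).norm_image_sub_le_of_norm_deriv_le
    (fun t _ => hG.differentiable two_ne_zero t) hsegment left_mem_uIcc right_mem_uIcc
  simpa [Real.norm_eq_abs, mul_assoc, ← sq] using this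

theorem lt_abs_sub_of_critical (hG : ContDiff ℝ 2 G) (hcrit : deriv G x₀ = 0)
    (hx₀ : x₀ ∈ Icc a b) (hM : ∀ x ∈ Icc a b, |deriv (deriv G) x| ≤ M) {δ c η : ℝ}
    (hδ : 0 < δ) (hfar : M * δ ^ 2 + η ≤ |G x₀ - c|) {x : ℝ} (hx : x ∈ Icc a b)
    (hGx : |G x - c| < η) : δ < |x - x₀| := by
  have hquad := abs_sub_le_mul_sq_of_critical hG hcrit hx₀ hM hx
  have htri : |G x₀ - c| ≤ |G x - G x₀| + |G x - c| :=
    abs_sub_comm (G x) (G x₀) ▸ abs_sub_le (G x₀) (G x) c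
  have hsq : M * δ ^ 2 < M * (x - x₀) ^ 2 := by linarith
  rw [← abs_of_pos hδ, ← sq_lt_sq]
  exact lt_of_mul_lt_mul_left hsq ((abs_nonneg _).trans (hM x₀ hx₀))

theorem volume_abs_sub_lt_le_of_critical_of_le_deriv_deriv (hG : ContDiff ℝ 2 G)
    (hcrit : deriv G x₀ = 0) (hx₀ : x₀ ∈ Icc a b) (hm₀ : 0 < m)
    (hm : ∀ x ∈ Icc a b, m ≤ deriv (deriv G) x) (hM : ∀ x ∈ Icc a b, |deriv (deriv G) x| ≤ M)
    {δ c η : ℝ} (hδ : 0 < δ) (hη : 0 ≤ η) (hfar : M * δ ^ 2 + η ≤ |G x₀ - c|) :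
    volume {x ∈ Icc a b | |G x - c| < η} ≤ ENNReal.ofReal (4 * η / (m * δ)) := by
  have hright : volume {x ∈ Icc (x₀ + δ) b | |G x - c| < η} ≤
      ENNReal.ofReal (2 * η / (m * δ)) :=
    volume_abs_sub_lt_le_of_le_deriv (convex_Icc _ _) (hG.differentiable two_ne_zero)
      (by positivity) fun t ht => by
        have ht' : t ∈ Icc a b := ⟨by linarith [hx₀.1, ht.1], ht.2⟩
        nlinarith [mul_sub_le_deriv_of_critical hG hcrit hx₀ hm ht' (by linarith [ht.1]), ht.1]
  have hleft : volume {x ∈ Icc a (x₀ - δ) | |(-G) x - -c| < η} ≤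
      ENNReal.ofReal (2 * η / (m * δ)) :=
    volume_abs_sub_lt_le_of_le_deriv (convex_Icc _ _) (hG.differentiable two_ne_zero).neg
      (by positivity) fun t ht => by
        have ht' : t ∈ Icc a b := ⟨ht.1, by linarith [hx₀.2, ht.2]⟩
        rw [deriv.neg']
        nlinarith [deriv_le_mul_sub_of_critical hG hcrit hx₀ hm ht' (by linarith [ht.2]), ht.2]
  have hcover : {x ∈ Icc a b | |G x - c| < η} ⊆
      {x ∈ Icc a (x₀ - δ) | |(-G) x - -c| < η} ∪ {x ∈ Icc (x₀ + δ) b | |G x - c| < η} := by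
    rintro x ⟨hx, hGx⟩
    have := lt_abs_sub_of_critical hG hcrit hx₀ hM hδ hfar hx hGx
    rcases le_total x x₀ with hxx₀ | hxx₀
    · rw [abs_of_nonpos (by linarith)] at this
      exact Or.inl ⟨⟨hx.1, by linarith⟩, by rwa [Pi.neg_apply, neg_sub_neg, abs_sub_comm]⟩
    · rw [abs_of_nonneg (by linarith)] at this
      exact Or.inr ⟨⟨by linarith, hx.2⟩, hGx⟩
  calc volume {x ∈ Icc a b | |G x - c| < η}
      ≤ ENNReal.ofReal (2 * η / (m * δ)) + ENNReal.ofReal (2 * η / (m * δ)) :=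
        (measure_mono hcover).trans ((measure_union_le _ _).trans (add_le_add hleft hright))
    _ = ENNReal.ofReal (4 * η / (m * δ)) := by
        rw [← ENNReal.ofReal_add (by positivity) (by positivity)]
        ring_nf

theorem volume_abs_add_lt_le_of_critical (hG : ContDiff ℝ 2 G) (hcrit : deriv G x₀ = 0)
    (hx₀ : x₀ ∈ Icc a b) (hm₀ : 0 < m) (hm : ∀ x ∈ Icc a b, m ≤ |deriv (deriv G) x|)
    (hM : ∀ x ∈ Icc a b, |deriv (deriv G) x| ≤ M) {δ c η : ℝ} (hδ : 0 < δ) (hη : 0 ≤ η)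
    (hfar : M * δ ^ 2 + η ≤ |G x₀ + c|) :
    volume {x ∈ Icc a b | |G x + c| < η} ≤ ENNReal.ofReal (4 * η / (m * δ)) := by
  obtain ⟨ε, hε, hεG⟩ := exists_abs_eq_one_forall_le_mul isPreconnected_Icc
    (hG.deriv' (n := 1)).continuous_deriv_one.continuousOn hm₀ hm
  have habs : ∀ y, |ε * y| = |y| := fun y => by rw [abs_mul, hε, one_mul]
  have hεG'' : deriv (deriv fun x => ε * G x) = fun x => ε * deriv (deriv G) x := by
    rw [deriv_const_mul_field', deriv_const_mul_field']
  have := volume_abs_sub_lt_le_of_critical_of_le_deriv_deriv (G := fun x => ε * G x) (c := -(ε * c))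
    (hG.const_smul ε) (by rw [deriv_const_mul_field']; simp [hcrit]) hx₀ hm₀
    (fun x hx => hεG''.symm ▸ hεG x hx) (fun x hx => by rw [hεG'', habs]; exact hM x hx) hδ hη
    (by rwa [sub_neg_eq_add, ← mul_add, habs])
  simpa only [sub_neg_eq_add, ← mul_add, habs] using this

end Critical

/-- **Measure estimate for Case IIa.** For `𝓕(x) = a₂f(x) + a₁x + λ(x)` with
`|a₂|` large, `𝓕'(x₀) = 0`, `a₀' ∈ ℤ` nearest to `-𝓕(x₀)` and `a₀ ≠ a₀'`, the
set `{x ∈ I : |𝓕(x) + a₀| < η}` has Lebesgue measure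
`≤ Cη/√(|a₂||a₀ - a₀'|)` for `0 < η ≤ 1/4`. -/
theorem case_IIa_measure_estimate
    (a b : ℝ) (hab : a ≤ b)
    (f lam : ℝ → ℝ) (hf : ContDiff ℝ 2 f) (hlam : ContDiff ℝ 2 lam)
    (c₁ c₂ : ℝ) (hc₁ : 0 < c₁)
    (hbound : ∀ x ∈ Icc a b, c₁ ≤ |deriv (deriv f) x| ∧ |deriv (deriv f) x| ≤ c₂) :
    ∃ C > (0 : ℝ), ∃ T > (0 : ℝ),
      ∀ a₁ a₂ : ℤ, ∀ F : ℝ → ℝ,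
        F = (fun x => (a₂ : ℝ) * f x + (a₁ : ℝ) * x + lam x) →
        T ≤ |(a₂ : ℝ)| →
        ∀ x₀ ∈ Icc a b, deriv F x₀ = 0 →
          ∀ a₀' : ℤ, |F x₀ + (a₀' : ℝ)| ≤ 1 / 2 →
            ∀ a₀ : ℤ, a₀ ≠ a₀' →
              ∀ η : ℝ, 0 < η → η ≤ 1 / 4 →
                volume {x ∈ Icc a b | |F x + (a₀ : ℝ)| < η} ≤
                  ENNReal.ofReal (C * η / Real.sqrt (|(a₂ : ℝ)| * |(a₀ : ℝ) - (a₀' : ℝ)|)) := by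
  obtain ⟨S, hS⟩ := isCompact_Icc.exists_bound_of_continuousOn (s := Icc a b)
    (hlam.deriv' (n := 1)).continuous_deriv_one.continuousOn
  have hK : 0 < c₂ + c₁ / 2 := by
    linarith [(hbound a (left_mem_Icc.mpr hab)).1.trans (hbound a (left_mem_Icc.mpr hab)).2]
  -- `C η / √(|a₂| D) = 4 η / (m δ)` for the choices of `m` and `δ` made below
  refine ⟨16 * √(c₂ + c₁ / 2) / c₁, by positivity, max 1 (2 * S / c₁), by positivity, ?_⟩
  rintro a₁ a₂ F rfl hT x₀ hx₀ hcrit a₀' ha₀' a₀ hne η hη hη₄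
  have hD : 1 ≤ |(a₀ : ℝ) - a₀'| := by exact_mod_cast Int.one_le_abs (sub_ne_zero.mpr hne)
  set A := |(a₂ : ℝ)|
  set D := |(a₀ : ℝ) - a₀'|
  set K := c₂ + c₁ / 2
  have hA : 1 ≤ A := (le_max_left _ _).trans hT
  have hSA : S ≤ A * c₁ / 2 := by linarith [(div_le_iff₀ hc₁).mp ((le_max_right _ _).trans hT)]
  have hF'' : ∀ x ∈ Icc a b, A * c₁ / 2 ≤ |deriv (deriv fun x => a₂ * f x + a₁ * x + lam x) x| ∧
      |deriv (deriv fun x => a₂ * f x + a₁ * x + lam x) x| ≤ A * K := fun x hx => by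
    rw [deriv_deriv_phase hf hlam]
    exact abs_mul_add_bounds (hbound x hx) (hS x hx) hSA
  have hfar : D ≤ |(a₂ * f x₀ + a₁ * x₀ + lam x₀) + a₀| + 1 / 2 := by
    have htri := abs_sub (a₂ * f x₀ + a₁ * x₀ + lam x₀ + a₀) (a₂ * f x₀ + a₁ * x₀ + lam x₀ + a₀')
    rw [add_sub_add_left_eq_sub] at htri
    linarith
  have hδ : A * K * (√(A * D) / (2 * A * √K)) ^ 2 = D / 4 := by
    rw [div_pow, mul_pow, mul_pow, Real.sq_sqrt (by positivity), Real.sq_sqrt hK.le]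
    field_simp
    norm_num
  calc _ ≤ ENNReal.ofReal (4 * η / (A * c₁ / 2 * (√(A * D) / (2 * A * √K)))) :=
        volume_abs_add_lt_le_of_critical (by fun_prop) hcrit hx₀ (by positivity)
          (fun x hx => (hF'' x hx).1) (fun x hx => (hF'' x hx).2) (by positivity) hη.le
          (by rw [hδ]; linarith)
    _ = ENNReal.ofReal (16 * √K / c₁ * η / √(A * D)) := by
        congr 1
        field_simp
        ring
end
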